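/- arXiv:2501.18388 — 8 statements merged into one kernel-verified Lean document; each statement's English description precedes it below -/
import Mathlib

section
/- Let ρ ∈ (0,1), δ ∈ (0, ρ/8], and suppose m ≥ 700·log(1/δ)/(z·ρ²). Then for every fixed threshold z₀ ∈ [3z/4, 3z/2]: (i) if E_{x∼D}[φ(x)] ≤ z/2 then P[avg > z₀] ≤ δ, and (ii) if E_{x∼D}[φ(x)] ≥ 2z then P[avg ≤ z₀] ≤ δ. (Correctness of the rThreshold algorithm, which outputs the bit b = 1{avg > z₀}.) -/
/-!
Multiplicative Chernoff bound with the parameter `t = ±1/4`. By convexity of `exp`, a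
`[0,1]`-valued `φ` satisfies `E[exp (t φ)] ≤ exp (E[φ] (eᵗ - 1))`, so by independence
`P[avg ≥ z₀] ≤ exp (m (E[φ] (e^{1/4} - 1) - z₀/4)) ≤ exp (-m z / 48)` when `E[φ] ≤ z/2`,
and `P[avg ≤ z₀] ≤ exp (m (E[φ] (e^{-1/4} - 1) + z₀/4)) ≤ exp (-m z / 40)` when
`E[φ] ≥ 2z`.
The sample size gives `log (1/δ) ≤ m z ρ² / 700 ≤ m z / 48`.
-/

open MeasureTheory ProbabilityTheory Real

lemma Real.exp_mul_le_one_add_mul_exp_sub_one (t : ℝ) {y : ℝ} (h0 : 0 ≤ y) (h1 : y ≤ 1) :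
    exp (t * y) ≤ 1 + y * (exp t - 1) := by
  have h := convexOn_exp.2 (Set.mem_univ t) (Set.mem_univ 0) h0 (sub_nonneg.2 h1) (by ring)
  simp only [smul_eq_mul, mul_zero, add_zero, exp_zero, mul_one] at h
  rw [mul_comm]
  linarith

lemma ProbabilityTheory.mgf_le_exp_integral_mul_exp_sub_one {Ω : Type*} [MeasurableSpace Ω]
    {μ : Measure Ω} [IsProbabilityMeasure μ] {X : Ω → ℝ} (hX : AEMeasurable X μ)
    (hX01 : ∀ᵐ ω ∂μ, X ω ∈ Set.Icc 0 1) (t : ℝ) :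
    mgf X μ t ≤ exp (μ[X] * (exp t - 1)) := by
  have hXint : Integrable X μ := Integrable.of_mem_Icc 0 1 hX hX01
  calc mgf X μ t ≤ ∫ ω, (1 + X ω * (exp t - 1)) ∂μ := by
        refine integral_mono_ae (integrable_exp_mul_of_mem_Icc hX hX01)
          ((integrable_const 1).add (hXint.mul_const _)) ?_
        filter_upwards [hX01] with ω hω
        exact exp_mul_le_one_add_mul_exp_sub_one t hω.1 hω.2
    _ = 1 + μ[X] * (exp t - 1) := by
        rw [integral_add (integrable_const 1) (hXint.mul_const _), integral_mul_const]
        simp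
    _ ≤ exp (μ[X] * (exp t - 1)) := by linarith [add_one_le_exp (μ[X] * (exp t - 1))]

lemma ProbabilityTheory.mgf_sum_pi {S ι : Type*} [MeasurableSpace S] [Fintype ι]
    (D : Measure S) [SigmaFinite D] (φ : S → ℝ) (t : ℝ) :
    mgf (fun s : ι → S => ∑ i, φ (s i)) (Measure.pi fun _ => D) t
      = mgf φ D t ^ Fintype.card ι := by
  simp only [mgf, Finset.mul_sum, exp_sum]
  exact integral_fintype_prod_eq_pow (fun x => exp (t * φ x))

noncomputable def sampleMean {S : Type*} {m : ℕ} (φ : S → ℝ) (s : Fin m → S) : ℝ :=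
  (m : ℝ)⁻¹ * ∑ i, φ (s i)

lemma sampleMean_mem_Icc {S : Type*} {φ : S → ℝ} {m : ℕ} (hφ : ∀ x, φ x ∈ Set.Icc 0 1)
    (s : Fin m → S) :
    sampleMean φ s ∈ Set.Icc 0 1 := by
  have hsum_le : ∑ i, φ (s i) ≤ m := by
    simpa using Finset.sum_le_sum fun i (_ : i ∈ Finset.univ) => (hφ (s i)).2
  refine ⟨mul_nonneg (by positivity) (Finset.sum_nonneg fun i _ => (hφ (s i)).1), ?_⟩
  calc sampleMean φ s ≤ (m : ℝ)⁻¹ * m := by unfold sampleMean; gcongr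
    _ ≤ 1 := inv_mul_le_one_of_le₀ le_rfl (Nat.cast_nonneg m)

section SampleMean

variable {S : Type*} [MeasurableSpace S] {D : Measure S} [IsProbabilityMeasure D]
  {φ : S → ℝ} {m : ℕ}

lemma measurable_sampleMean (hφm : Measurable φ) :
    Measurable (sampleMean (m := m) φ) :=
  (Finset.measurable_sum _ fun i _ => hφm.comp (measurable_pi_apply i)).const_mul _

lemma integrable_exp_mul_sampleMean (hφm : Measurable φ) (hφ : ∀ x, φ x ∈ Set.Icc 0 1)
    (t : ℝ) :
    Integrable (fun s => exp (t * sampleMean φ s)) (Measure.pi fun _ : Fin m => D) :=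
  integrable_exp_mul_of_mem_Icc (measurable_sampleMean hφm).aemeasurable
    (ae_of_all _ (sampleMean_mem_Icc hφ))

lemma mgf_sampleMean_le (hφm : Measurable φ) (hφ : ∀ x, φ x ∈ Set.Icc 0 1) (hm : m ≠ 0)
    (t : ℝ) :
    mgf (sampleMean φ) (Measure.pi fun _ : Fin m => D) (m * t)
      ≤ exp (m * (D[φ] * (exp t - 1))) := by
  have hscale : mgf (sampleMean φ) (Measure.pi fun _ : Fin m => D) (m * t)
      = mgf (fun s : Fin m → S => ∑ i, φ (s i)) (Measure.pi fun _ => D) t := by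
    change mgf (fun s : Fin m → S => (m : ℝ)⁻¹ * ∑ i, φ (s i)) _ _ = _
    rw [mgf_const_mul, inv_mul_cancel_left₀ (Nat.cast_ne_zero.2 hm)]
  rw [hscale, mgf_sum_pi, Fintype.card_fin, exp_nat_mul]
  exact pow_le_pow_left₀ mgf_nonneg
    (mgf_le_exp_integral_mul_exp_sub_one hφm.aemeasurable (ae_of_all _ hφ) t) m

lemma measure_le_sampleMean_le (hφm : Measurable φ) (hφ : ∀ x, φ x ∈ Set.Icc 0 1)
    {t : ℝ} (ht : 0 ≤ t) (a : ℝ) :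
    (Measure.pi fun _ : Fin m => D) {s | a ≤ sampleMean φ s}
      ≤ ENNReal.ofReal (exp (m * (D[φ] * (exp t - 1) - t * a))) := by
  rw [ENNReal.le_ofReal_iff_toReal_le (measure_ne_top _ _) (exp_nonneg _), ← measureReal_def]
  rcases eq_or_ne m 0 with rfl | hm
  · simp
  calc _ ≤ exp (-(m * t) * a) * mgf (sampleMean φ) (Measure.pi fun _ : Fin m => D) (m * t) :=
        measure_ge_le_exp_mul_mgf a (by positivity) (integrable_exp_mul_sampleMean hφm hφ _)
    _ ≤ exp (-(m * t) * a) * exp (m * (D[φ] * (exp t - 1))) := by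
        gcongr; exact mgf_sampleMean_le hφm hφ hm t
    _ = exp (m * (D[φ] * (exp t - 1) - t * a)) := by rw [← exp_add]; ring_nf

lemma measure_sampleMean_le_le (hφm : Measurable φ) (hφ : ∀ x, φ x ∈ Set.Icc 0 1)
    {t : ℝ} (ht : t ≤ 0) (a : ℝ) :
    (Measure.pi fun _ : Fin m => D) {s | sampleMean φ s ≤ a}
      ≤ ENNReal.ofReal (exp (m * (D[φ] * (exp t - 1) - t * a))) := by
  rw [ENNReal.le_ofReal_iff_toReal_le (measure_ne_top _ _) (exp_nonneg _), ← measureReal_def]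
  rcases eq_or_ne m 0 with rfl | hm
  · simp
  calc _ ≤ exp (-(m * t) * a) * mgf (sampleMean φ) (Measure.pi fun _ : Fin m => D) (m * t) :=
        measure_le_le_exp_mul_mgf a (mul_nonpos_of_nonneg_of_nonpos m.cast_nonneg ht)
          (integrable_exp_mul_sampleMean hφm hφ _)
    _ ≤ exp (-(m * t) * a) * exp (m * (D[φ] * (exp t - 1))) := by
        gcongr; exact mgf_sampleMean_le hφm hφ hm t
    _ = exp (m * (D[φ] * (exp t - 1) - t * a)) := by rw [← exp_add]; ring_nf

end SampleMean

theorem rThreshold_correct_general {X : Type*} [MeasurableSpace X]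
    (D : Measure X) [IsProbabilityMeasure D]
    (φ : X → ℝ) (hφm : Measurable φ) (hφ0 : ∀ x, 0 ≤ φ x) (hφ1 : ∀ x, φ x ≤ 1)
    (z : ℝ) (hz : z ∈ Set.Ioo (0 : ℝ) 1) (m : ℕ)
    (ρ : ℝ) (hρ : ρ ∈ Set.Ioo (0 : ℝ) 1) (δ : ℝ) (hδ : δ ∈ Set.Ioc (0 : ℝ) (ρ / 8))
    (hsamp : 700 * Real.log (1 / δ) / (z * ρ ^ 2) ≤ (m : ℝ))
    (z₀ : ℝ) (hz₀ : z₀ ∈ Set.Icc (3 * z / 4) (3 * z / 2)) :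
    ((∫ x, φ x ∂D ≤ z / 2 →
        (Measure.pi fun _ : Fin m => D)
          {s | z₀ < (m : ℝ)⁻¹ * ∑ i, φ (s i)} ≤ ENNReal.ofReal δ) ∧
      (2 * z ≤ ∫ x, φ x ∂D →
        (Measure.pi fun _ : Fin m => D)
          {s | (m : ℝ)⁻¹ * ∑ i, φ (s i) ≤ z₀} ≤ ENNReal.ofReal δ)) := by
  have hφ : ∀ x, φ x ∈ Set.Icc 0 1 := fun x => ⟨hφ0 x, hφ1 x⟩
  have hlog : log (1 / δ) ≤ m * z / 48 := by
    have hρ2 : ρ ^ 2 ≤ 1 := pow_le_one₀ hρ.1.le hρ.2.le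
    have hsamp' := (div_le_iff₀ (by have := hρ.1; have := hz.1; positivity)).1 hsamp
    nlinarith [mul_nonneg m.cast_nonneg hz.1.le]
  have htail : ∀ c ≤ -(z / 48), ENNReal.ofReal (exp (m * c)) ≤ ENNReal.ofReal δ := by
    intro c hc
    rw [ENNReal.ofReal_le_ofReal_iff hδ.1.le, ← exp_log hδ.1, exp_le_exp]
    rw [one_div, log_inv] at hlog
    nlinarith [mul_le_mul_of_nonneg_left hc m.cast_nonneg]
  refine ⟨fun hE => ?_, fun hE => ?_⟩
  · have hexp : exp (1 / 4) ≤ 4 / 3 := by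
      convert exp_bound_div_one_sub_of_interval (x := 1 / 4) (by norm_num) (by norm_num) using 1
      norm_num
    calc _ ≤ (Measure.pi fun _ : Fin m => D) {s | z₀ ≤ sampleMean φ s} :=
          measure_mono fun s (hs : z₀ < sampleMean φ s) => hs.le
      _ ≤ _ := measure_le_sampleMean_le hφm hφ (t := 1 / 4) (by norm_num) z₀
      _ ≤ _ := htail _ (by
        nlinarith [mul_le_mul_of_nonneg_right hE
          (sub_nonneg.2 (one_le_exp (x := 1 / 4) (by norm_num))), hz₀.1, hz.1])
  · have hexp : exp (-(1 / 4)) ≤ 4 / 5 := by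
      rw [exp_neg]
      exact inv_le_of_inv_le₀ (by norm_num) (by linarith [add_one_le_exp (1 / 4)])
    calc _ ≤ _ := measure_sampleMean_le_le hφm hφ (t := -(1 / 4)) (by norm_num) z₀
      _ ≤ _ := htail _ (by
        nlinarith [mul_le_mul_of_nonpos_right hE (by linarith : exp (-(1 / 4)) - 1 ≤ 0),
          hz₀.2, hz.1])

/-- Correctness of the `rThreshold` algorithm: with `m ≥ 700·log(1/δ)/(z·ρ²)` samples and
any fixed threshold `z₀ ∈ [3z/4, 3z/2]`, (i) if `E[φ] ≤ z/2` then `P[avg > z₀] ≤ δ`, and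
(ii) if `E[φ] ≥ 2z` then `P[avg ≤ z₀] ≤ δ`, where `avg = (1/m)·∑_{i=1}^m φ(X_i)` with
`X₁,…,X_m` i.i.d. from `D`. -/
theorem rThreshold_correct {X : Type*} [MeasurableSpace X]
    (D : Measure X) [IsProbabilityMeasure D]
    (φ : X → ℝ) (hφm : Measurable φ) (hφ0 : ∀ x, 0 ≤ φ x) (hφ1 : ∀ x, φ x ≤ 1)
    (z : ℝ) (hz : z ∈ Set.Ioo (0 : ℝ) 1) (m : ℕ) (hm : 0 < m)
    (ρ : ℝ) (hρ : ρ ∈ Set.Ioo (0 : ℝ) 1) (δ : ℝ) (hδ : δ ∈ Set.Ioc (0 : ℝ) (ρ / 8))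
    (hsamp : 700 * Real.log (1 / δ) / (z * ρ ^ 2) ≤ (m : ℝ))
    (z₀ : ℝ) (hz₀ : z₀ ∈ Set.Icc (3 * z / 4) (3 * z / 2)) :
    ((∫ x, φ x ∂D ≤ z / 2 →
        (Measure.pi fun _ : Fin m => D)
          {s | z₀ < (m : ℝ)⁻¹ * ∑ i, φ (s i)} ≤ ENNReal.ofReal δ) ∧
      (2 * z ≤ ∫ x, φ x ∂D →
        (Measure.pi fun _ : Fin m => D)
          {s | (m : ℝ)⁻¹ * ∑ i, φ (s i) ≤ z₀} ≤ ENNReal.ofReal δ)) :=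
  rThreshold_correct_general D φ hφm hφ0 hφ1 z hz m ρ hρ δ hδ hsamp z₀ hz₀
end

section
/- Let ρ ∈ (0,1), δ ∈ (0, ρ/8], and m ≥ 700·log(1/δ)/(z·ρ²). Let S₁ and S₂ be two independent samples of m points each drawn i.i.d. from D, with empirical averages avg(S₁) and avg(S₂) of φ, and let z₀ be drawn uniformly from [3z/4, 3z/2], independently of S₁ and S₂. Then P[1{avg(S₁) > z₀} ≠ 1{avg(S₂) > z₀}] ≤ ρ. (Replicability of the rThreshold algorithm.) -/
/-!
Write `μ = E φ`. Each sample average has mean `μ` and variance `Var φ / m ≤ μ / m`, and the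
two outputs disagree exactly when `z₀` lies between `avg(S₁)` and `avg(S₂)`.

If `μ ≤ 2z`, integrating over `z₀` first bounds the disagreement probability by
`E|avg(S₁) - avg(S₂)| / (3z/4) ≤ √(2 Var(avg)) / (3z/4) ≤ ρ`.
If `μ > 2z`, disagreement forces `avg(Sᵢ) ≤ z₀ ≤ 3z/2` for some `i`, and Chebyshev's inequality
bounds each of these two events by `(μ/m) / (μ/4)² ≤ ρ/2`.
-/

open MeasureTheory ProbabilityTheory Set

lemma two_le_log_one_div {δ : ℝ} (hδ0 : 0 < δ) (hδ : δ ≤ 1 / 8) : 2 ≤ Real.log (1 / δ) :=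
  calc (2 : ℝ) ≤ 3 * Real.log 2 := by linarith [Real.log_two_gt_d9]
    _ = Real.log 8 := by rw [show (8 : ℝ) = 2 ^ 3 by norm_num, Real.log_pow]; norm_num
    _ ≤ Real.log (1 / δ) := Real.log_le_log (by norm_num) (by rw [le_div_iff₀ hδ0]; linarith)

lemma setOf_lt_ne_lt_eq_Ico (x y : ℝ) :
    {t : ℝ | (t < x) ≠ (t < y)} = Ico (min x y) (max x y) := by
  ext t
  simp only [mem_ofPred_eq, mem_Ico, ne_eq, eq_iff_iff, lt_max_iff, ← not_lt, lt_min_iff]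
  tauto

section Threshold

variable {a b : ℝ}

lemma cond_Icc_setOf_lt_ne_lt_le (hab : a < b) (x y : ℝ) :
    volume[|Icc a b] {t | (t < x) ≠ (t < y)} ≤ ENNReal.ofReal (|x - y| / (b - a)) := by
  rw [cond_apply measurableSet_Icc, Real.volume_Icc, setOf_lt_ne_lt_eq_Ico,
    ENNReal.ofReal_div_of_pos (sub_pos.2 hab), ENNReal.div_eq_inv_mul]
  gcongr
  calc volume (Icc a b ∩ Ico (min x y) (max x y)) ≤ volume (Ico (min x y) (max x y)) :=
        measure_mono inter_subset_right
    _ = ENNReal.ofReal |x - y| := by rw [Real.volume_Ico, max_sub_min_eq_abs']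

lemma cond_Icc_setOf_lt_ne_lt_eq_zero {x y : ℝ} (hx : b < x) (hy : b < y) :
    volume[|Icc a b] {t | (t < x) ≠ (t < y)} = 0 := by
  have hempty : Icc a b ∩ Ico (min x y) (max x y) = ∅ := by grind
  rw [cond_apply measurableSet_Icc, setOf_lt_ne_lt_eq_Ico, hempty, measure_empty, mul_zero]

variable {Ω : Type*} [MeasurableSpace Ω] (ν : Measure Ω) {f g : Ω → ℝ}

lemma prod_cond_Icc_setOf_lt_ne_lt (hf : Measurable f) (hg : Measurable g) :
    (ν.prod volume[|Icc a b]) {p | (p.2 < f p.1) ≠ (p.2 < g p.1)}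
      = ∫⁻ ω, volume[|Icc a b] {t | (t < f ω) ≠ (t < g ω)} ∂ν := by
  have hmeas : MeasurableSet {p : Ω × ℝ | (p.2 < f p.1) ≠ (p.2 < g p.1)} := by
    convert (measurableSet_lt measurable_snd (hf.comp measurable_fst)).symmDiff
      (measurableSet_lt measurable_snd (hg.comp measurable_fst)) using 1
    ext p
    simp only [mem_ofPred_eq, mem_symmDiff, ne_eq, eq_iff_iff, Function.comp_apply]
    tauto
  exact Measure.prod_apply hmeas

lemma prod_cond_Icc_setOf_lt_ne_lt_le_integral (hab : a < b) (hf : Measurable f)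
    (hg : Measurable g) (hfg : Integrable (fun ω ↦ f ω - g ω) ν) :
    (ν.prod volume[|Icc a b]) {p | (p.2 < f p.1) ≠ (p.2 < g p.1)}
      ≤ ENNReal.ofReal ((∫ ω, |f ω - g ω| ∂ν) / (b - a)) := by
  rw [prod_cond_Icc_setOf_lt_ne_lt ν hf hg, ← integral_div,
    ofReal_integral_eq_lintegral_ofReal (hfg.abs.div_const _)
      (ae_of_all _ fun ω ↦ div_nonneg (abs_nonneg _) (sub_nonneg.2 hab.le))]
  exact lintegral_mono fun ω ↦ cond_Icc_setOf_lt_ne_lt_le hab _ _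

lemma prod_cond_Icc_setOf_lt_ne_lt_le_measure (hf : Measurable f) (hg : Measurable g) :
    (ν.prod volume[|Icc a b]) {p | (p.2 < f p.1) ≠ (p.2 < g p.1)}
      ≤ ν {ω | f ω ≤ b ∨ g ω ≤ b} := by
  have hS : MeasurableSet {ω | f ω ≤ b ∨ g ω ≤ b} :=
    (measurableSet_le hf measurable_const).union (measurableSet_le hg measurable_const)
  rw [prod_cond_Icc_setOf_lt_ne_lt ν hf hg, ← lintegral_indicator_one hS]
  refine lintegral_mono fun ω ↦ ?_
  by_cases hω : f ω ≤ b ∨ g ω ≤ b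
  · simpa [indicator_of_mem (show ω ∈ {ω | f ω ≤ b ∨ g ω ≤ b} from hω)] using prob_le_one
  · push Not at hω
    rw [cond_Icc_setOf_lt_ne_lt_eq_zero hω.1 hω.2]
    exact zero_le

end Threshold

section Moments

variable {Ω : Type*} [MeasurableSpace Ω] {μ : Measure Ω} [IsProbabilityMeasure μ] {Y : Ω → ℝ}

lemma sq_integral_abs_le_integral_sq (hY : MemLp Y 2 μ) :
    (∫ ω, |Y ω| ∂μ) ^ 2 ≤ ∫ ω, Y ω ^ 2 ∂μ := by
  have h := variance_eq_sub hY.abs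
  simp only [Pi.pow_apply, Pi.abs_apply, sq_abs] at h
  linarith [variance_nonneg |Y| μ]

lemma integral_abs_sub_prod_le_sqrt (hY : MemLp Y 2 μ) :
    ∫ p, |Y p.1 - Y p.2| ∂(μ.prod μ) ≤ √(2 * Var[Y; μ]) := by
  have hZ : MemLp (fun p : Ω × Ω ↦ Y p.1 - Y p.2) 2 (μ.prod μ) :=
    (hY.comp_fst μ).sub (hY.comp_snd μ)
  have hmean : ∫ p, (Y p.1 - Y p.2) ∂(μ.prod μ) = 0 := by
    rw [integral_sub ((hY.integrable one_le_two).comp_fst μ)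
      ((hY.integrable one_le_two).comp_snd μ), integral_fun_fst, integral_fun_snd]
    simp
  have hvar : Var[fun p : Ω × Ω ↦ Y p.1 - Y p.2; μ.prod μ] = 2 * Var[Y; μ] := by
    have h := variance_add_prod hY hY.neg
    simp only [Pi.neg_apply, ← sub_eq_add_neg, variance_neg] at h
    rw [h, two_mul]
  have hsq : ∫ p, (Y p.1 - Y p.2) ^ 2 ∂(μ.prod μ) = 2 * Var[Y; μ] := by
    have h := variance_eq_sub hZ
    simp only [Pi.pow_apply] at h
    rw [← hvar, h, hmean]
    ring
  exact Real.le_sqrt_of_sq_le (hsq ▸ sq_integral_abs_le_integral_sq hZ)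

lemma variance_le_integral_of_mem_Icc (hYm : Measurable Y) (hY : ∀ ω, Y ω ∈ Icc (0 : ℝ) 1) :
    Var[Y; μ] ≤ ∫ ω, Y ω ∂μ := by
  have hYL : MemLp Y 2 μ := memLp_of_bounded (ae_of_all _ hY) hYm.aestronglyMeasurable 2
  refine (variance_le_expectation_sq hYm.aestronglyMeasurable).trans
    (integral_mono hYL.integrable_sq (hYL.integrable one_le_two) fun ω ↦ ?_)
  exact pow_le_of_le_one (hY ω).1 (hY ω).2 two_ne_zero

lemma measure_le_le_variance_div_sq (hY : MemLp Y 2 μ) {b : ℝ} (hb : b < μ[Y]) :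
    μ {ω | Y ω ≤ b} ≤ ENNReal.ofReal (Var[Y; μ] / (μ[Y] - b) ^ 2) := by
  refine (measure_mono fun ω (hω : Y ω ≤ b) ↦ ?_).trans
    (meas_ge_le_variance_div_sq hY (sub_pos.2 hb))
  show μ[Y] - b ≤ |Y ω - μ[Y]|
  rw [abs_sub_comm]
  exact (sub_le_sub_left hω _).trans (le_abs_self _)

end Moments

noncomputable def sampleAvg {X : Type*} {m : ℕ} (φ : X → ℝ) (s : Fin m → X) : ℝ :=
  (m : ℝ)⁻¹ * ∑ i, φ (s i)

lemma sampleAvg_mem_Icc {X : Type*} {m : ℕ} {φ : X → ℝ} (hφ : ∀ x, φ x ∈ Icc (0 : ℝ) 1)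
    (s : Fin m → X) : sampleAvg φ s ∈ Icc (0 : ℝ) 1 := by
  rcases Nat.eq_zero_or_pos m with rfl | hm
  · simp [sampleAvg]
  have hsum : ∑ i, φ (s i) ≤ ∑ _i : Fin m, (1 : ℝ) := Finset.sum_le_sum fun i _ ↦ (hφ (s i)).2
  constructor
  · exact mul_nonneg (by positivity) (Finset.sum_nonneg fun i _ ↦ (hφ (s i)).1)
  · rw [sampleAvg, inv_mul_le_iff₀ (by positivity), mul_one]
    simpa using hsum

section SampleAvg

variable {X : Type*} [MeasurableSpace X] {D : Measure X} [IsProbabilityMeasure D] {φ : X → ℝ}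
  {m : ℕ}

lemma measurable_sampleAvg (hφ : Measurable φ) : Measurable (sampleAvg (m := m) φ) := by
  unfold sampleAvg
  fun_prop

lemma integral_sampleAvg (hm : m ≠ 0) (hφ : Integrable φ D) :
    ∫ s, sampleAvg φ s ∂(Measure.pi fun _ : Fin m ↦ D) = ∫ x, φ x ∂D := by
  have heval (i : Fin m) : ∫ s, φ (s i) ∂(Measure.pi fun _ : Fin m ↦ D) = ∫ x, φ x ∂D :=
    integral_comp_eval (μ := fun _ ↦ D) hφ.aestronglyMeasurable
  simp only [sampleAvg]
  rw [integral_const_mul, integral_finsetSum _ fun i _ ↦ integrable_comp_eval hφ]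
  simp only [heval, Finset.sum_const, Finset.card_univ, Fintype.card_fin, nsmul_eq_mul]
  field_simp

lemma variance_sampleAvg (hφ : MemLp φ 2 D) :
    Var[sampleAvg φ; Measure.pi fun _ : Fin m ↦ D] = Var[φ; D] / m := by
  have hsum := variance_sum_pi (μ := fun _ : Fin m ↦ D) (X := fun _ ↦ φ) fun _ ↦ hφ
  have hfun : sampleAvg φ
      = fun s : Fin m → X ↦ (m : ℝ)⁻¹ * (∑ i, fun s : Fin m → X ↦ φ (s i)) s := by
    ext s
    simp [sampleAvg]
  rw [hfun, variance_const_mul, hsum]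
  simp only [Finset.sum_const, Finset.card_univ, Fintype.card_fin, nsmul_eq_mul]
  field_simp

end SampleAvg

section RandomThreshold

variable {Ω : Type*} [MeasurableSpace Ω] {P : Measure Ω} [IsProbabilityMeasure P] {A : Ω → ℝ}
  {a b : ℝ}

lemma measure_threshold_ne_le_sqrt_variance (hab : a < b) (hA : Measurable A)
    (hAL : MemLp A 2 P) :
    ((P.prod P).prod volume[|Icc a b]) {p | (p.2 < A p.1.1) ≠ (p.2 < A p.1.2)}
      ≤ ENNReal.ofReal (√(2 * Var[A; P]) / (b - a)) := by
  have hAi := hAL.integrable one_le_two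
  refine (prod_cond_Icc_setOf_lt_ne_lt_le_integral (P.prod P) hab (hA.comp measurable_fst)
    (hA.comp measurable_snd) ((hAi.comp_fst P).sub (hAi.comp_snd P))).trans ?_
  gcongr
  exact integral_abs_sub_prod_le_sqrt hAL

lemma measure_threshold_ne_le_two_mul (hA : Measurable A) :
    ((P.prod P).prod volume[|Icc a b]) {p | (p.2 < A p.1.1) ≠ (p.2 < A p.1.2)}
      ≤ 2 * P {ω | A ω ≤ b} := by
  have hfst : (P.prod P) {q | A q.1 ≤ b} = P {ω | A ω ≤ b} :=
    measurePreserving_fst.measure_preimage (measurableSet_le hA measurable_const).nullMeasurableSet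
  have hsnd : (P.prod P) {q | A q.2 ≤ b} = P {ω | A ω ≤ b} :=
    measurePreserving_snd.measure_preimage (measurableSet_le hA measurable_const).nullMeasurableSet
  calc _ ≤ (P.prod P) ({q | A q.1 ≤ b} ∪ {q | A q.2 ≤ b}) :=
        prod_cond_Icc_setOf_lt_ne_lt_le_measure _ (hA.comp measurable_fst) (hA.comp measurable_snd)
    _ ≤ (P.prod P) {q | A q.1 ≤ b} + (P.prod P) {q | A q.2 ≤ b} := measure_union_le _ _
    _ = 2 * P {ω | A ω ≤ b} := by rw [hfst, hsnd, two_mul]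

variable {z ρ n : ℝ}

lemma measure_threshold_ne_le_of_integral_le (hA : Measurable A) (hAL : MemLp A 2 P)
    (hz : 0 < z) (hρ : 0 < ρ) (hn : 0 < n) (hvar : Var[A; P] ≤ P[A] / n)
    (hsize : 1400 ≤ n * (z * ρ ^ 2)) (hmean : P[A] ≤ 2 * z) :
    ((P.prod P).prod volume[|Icc (3 * z / 4) (3 * z / 2)])
      {p | (p.2 < A p.1.1) ≠ (p.2 < A p.1.2)} ≤ ENNReal.ofReal ρ := by
  refine (measure_threshold_ne_le_sqrt_variance (by linarith) hA hAL).trans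
    (ENNReal.ofReal_le_ofReal ?_)
  have hvar' : n * (2 * Var[A; P]) ≤ 4 * z := by
    rw [le_div_iff₀ hn] at hvar
    linarith
  rw [div_le_iff₀ (by linarith), Real.sqrt_le_iff]
  refine ⟨mul_nonneg hρ.le (by linarith), le_of_mul_le_mul_left ?_ hn⟩
  nlinarith

lemma measure_threshold_ne_le_of_two_mul_lt_integral (hA : Measurable A) (hAL : MemLp A 2 P)
    (hz : 0 < z) (hρ : ρ ∈ Ioo (0 : ℝ) 1) (hn : 0 < n) (hvar : Var[A; P] ≤ P[A] / n)
    (hsize : 1400 ≤ n * (z * ρ ^ 2)) (hmean : 2 * z < P[A]) :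
    ((P.prod P).prod volume[|Icc (3 * z / 4) (3 * z / 2)])
      {p | (p.2 < A p.1.1) ≠ (p.2 < A p.1.2)} ≤ ENNReal.ofReal ρ := by
  refine (measure_threshold_ne_le_two_mul hA).trans ?_
  refine (mul_le_mul_right (measure_le_le_variance_div_sq hAL (by linarith)) 2).trans ?_
  rw [← ENNReal.ofReal_ofNat 2, ← ENNReal.ofReal_mul zero_le_two]
  refine ENNReal.ofReal_le_ofReal ?_
  have hμ : 0 < P[A] := by linarith
  have hgap : P[A] / 4 ≤ P[A] - 3 * z / 2 := by linarith
  have hchebyshev : Var[A; P] / (P[A] - 3 * z / 2) ^ 2 ≤ P[A] / n / (P[A] / 4) ^ 2 :=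
    div_le_div₀ (by positivity) hvar (by positivity) (pow_le_pow_left₀ (by positivity) hgap 2)
  have hsize' : 32 ≤ ρ * (n * P[A]) := by
    nlinarith [mul_le_mul_of_nonneg_left hρ.2.le (mul_pos (mul_pos hn hz) hρ.1).le,
      mul_lt_mul_of_pos_left hmean (mul_pos hρ.1 hn)]
  calc 2 * (Var[A; P] / (P[A] - 3 * z / 2) ^ 2) ≤ 2 * (P[A] / n / (P[A] / 4) ^ 2) := by gcongr
    _ = 32 / (n * P[A]) := by field_simp; ring
    _ ≤ ρ := by rw [div_le_iff₀ (by positivity)]; exact hsize'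

end RandomThreshold

/-- Replicability of the `rThreshold` algorithm: with `m ≥ 700·log(1/δ)/(z·ρ²)`, two
independent i.i.d. samples `S₁, S₂` of size `m` from `D`, and `z₀` drawn uniformly from
`[3z/4, 3z/2]` independently of the samples,
`P[1{avg(S₁) > z₀} ≠ 1{avg(S₂) > z₀}] ≤ ρ`. -/
theorem rThreshold_replicable {X : Type*} [MeasurableSpace X]
    (D : Measure X) [IsProbabilityMeasure D]
    (φ : X → ℝ) (hφm : Measurable φ) (hφ0 : ∀ x, 0 ≤ φ x) (hφ1 : ∀ x, φ x ≤ 1)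
    (z : ℝ) (hz : z ∈ Set.Ioo (0 : ℝ) 1) (m : ℕ) (hm : 0 < m)
    (ρ : ℝ) (hρ : ρ ∈ Set.Ioo (0 : ℝ) 1) (δ : ℝ) (hδ : δ ∈ Set.Ioc (0 : ℝ) (ρ / 8))
    (hsamp : 700 * Real.log (1 / δ) / (z * ρ ^ 2) ≤ (m : ℝ)) :
    (((Measure.pi fun _ : Fin m => D).prod (Measure.pi fun _ : Fin m => D)).prod
        ((volume (Set.Icc (3 * z / 4) (3 * z / 2)))⁻¹ •
          volume.restrict (Set.Icc (3 * z / 4) (3 * z / 2))))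
      {p | (p.2 < (m : ℝ)⁻¹ * ∑ i, φ (p.1.1 i)) ≠ (p.2 < (m : ℝ)⁻¹ * ∑ i, φ (p.1.2 i))}
      ≤ ENNReal.ofReal ρ := by
  set P := Measure.pi fun _ : Fin m ↦ D
  have hφI (x : X) : φ x ∈ Icc (0 : ℝ) 1 := ⟨hφ0 x, hφ1 x⟩
  have hφL : MemLp φ 2 D := memLp_of_bounded (ae_of_all _ hφI) hφm.aestronglyMeasurable 2
  have hA : Measurable (sampleAvg (m := m) φ) := measurable_sampleAvg hφm
  have hAL : MemLp (sampleAvg φ) 2 P :=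
    memLp_of_bounded (ae_of_all _ (sampleAvg_mem_Icc hφI)) hA.aestronglyMeasurable 2
  have hm0 : (0 : ℝ) < m := Nat.cast_pos.2 hm
  have hvar : Var[sampleAvg φ; P] ≤ P[sampleAvg φ] / m := by
    rw [variance_sampleAvg hφL, integral_sampleAvg hm.ne' (hφL.integrable one_le_two)]
    exact div_le_div_of_nonneg_right (variance_le_integral_of_mem_Icc hφm hφI) hm0.le
  have hsize : 1400 ≤ (m : ℝ) * (z * ρ ^ 2) := by
    have hlog := two_le_log_one_div hδ.1 (by linarith [hδ.2, hρ.2])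
    rw [div_le_iff₀ (mul_pos hz.1 (pow_pos hρ.1 2))] at hsamp
    linarith
  -- The goal is about `volume[|Icc (3 * z / 4) (3 * z / 2)]` and `sampleAvg φ`, by definition.
  rcases le_or_gt P[sampleAvg φ] (2 * z) with hmean | hmean
  · exact measure_threshold_ne_le_of_integral_le hA hAL hz.1 hρ.1 hm0 hvar hsize hmean
  · exact measure_threshold_ne_le_of_two_mul_lt_integral hA hAL hz.1 hρ hm0 hvar hsize hmean
end

section
/- Let t ∈ {1,…,T} and ε₀ ∈ (0,1). If er_{D_{μ_t}}(h_t) ≤ ε₀, then E_{x∼D}[exp(N_{t+1}(x))] ≤ E_{x∼D}[exp(M_t(x))]·exp(2ε₀). In particular, E_{x∼D}[exp(N_{t+1}(x))] ≤ e^{c_t}·d(μ_t)·((e−1)·er_{D_{μ_t}}(h_t) + 1). -/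
open MeasureTheory

/-- One step of the rMetaBoost potential argument: if `er_{D_{μ_t}}(h_t) ≤ ε₀` then
`E_D[exp(N_{t+1})] ≤ E_D[exp(M_t)]·exp(2ε₀)`; in particular
`E_D[exp(N_{t+1})] ≤ e^{c_t}·d(μ_t)·((e−1)·er_{D_{μ_t}}(h_t) + 1)`. -/
theorem rMetaBoost_potential_step
    {X : Type*} [MeasurableSpace X]
    (D : Measure X) [IsProbabilityMeasure D]
    (f : X → ℝ) (hfm : Measurable f) (hfpm : ∀ x, f x = -1 ∨ f x = 1)
    (T : ℕ) (hT : 0 < T)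
    (h : ℕ → X → ℝ) (hhm : ∀ t, Measurable (h t)) (hhpm : ∀ t x, h t x = -1 ∨ h t x = 1)
    (b : ℕ → ℝ) (hb : ∀ t, b t = 0 ∨ b t = 1)
    (c : ℕ → ℝ) (N M : ℕ → X → ℝ)
    (hc1 : c 1 = 0) (hN1 : ∀ x, N 1 x = 0) (hM1 : ∀ x, M 1 x = 0)
    (hcrec : ∀ t, 1 ≤ t → t ≤ T → c (t + 1) = c t + b (t + 1))
    (hNrec : ∀ t, 1 ≤ t → t ≤ T → ∀ x,
      N (t + 1) x = M t x + if h t x ≠ f x then 1 else 0)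
    (hMrec : ∀ t, 1 ≤ t → t ≤ T → ∀ x, M (t + 1) x = min (N (t + 1) x) (c (t + 1)))
    (Dμ : ℕ → Measure X)
    (hDμ : ∀ t, Dμ t = D.withDensity fun x =>
      ENNReal.ofReal (Real.exp (M t x - c t) / ∫ y, Real.exp (M t y - c t) ∂D))
    (t : ℕ) (ht1 : 1 ≤ t) (htT : t ≤ T)
    (ε₀ : ℝ) (hε₀ : ε₀ ∈ Set.Ioo (0 : ℝ) 1)
    (her : Dμ t {x | h t x ≠ f x} ≤ ENNReal.ofReal ε₀) :
    (∫ x, Real.exp (N (t + 1) x) ∂D ≤ (∫ x, Real.exp (M t x) ∂D) * Real.exp (2 * ε₀)) ∧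
      (∫ x, Real.exp (N (t + 1) x) ∂D ≤
        Real.exp (c t) * (∫ x, Real.exp (M t x - c t) ∂D) *
          ((Real.exp 1 - 1) * (Dμ t {x | h t x ≠ f x}).toReal + 1)) := by
  classical
  obtain ⟨hε0, hε1⟩ := hε₀
  have hSm : ∀ s, MeasurableSet {x | h s x ≠ f x} := fun s =>
    (measurableSet_eq_fun (hhm s) hfm).compl
  have key : ∀ s, 1 ≤ s → s ≤ T + 1 →
      Measurable (M s) ∧ 0 ≤ c s ∧ (∀ x, 0 ≤ M s x) ∧ (∀ x, M s x ≤ c s) := by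
    intro s hs1
    induction s, hs1 using Nat.le_induction with
    | base =>
      intro _
      have hM : M 1 = fun _ => 0 := funext hM1
      exact ⟨by rw [hM]; exact measurable_const, by rw [hc1],
        fun x => by rw [hM1], fun x => by rw [hM1, hc1]⟩
    | succ u hu ih =>
      intro hT'
      have huT : u ≤ T := by omega
      obtain ⟨hmeas, hc0, hM0, hMc⟩ := ih (by omega)
      have hMeq : M (u+1) = fun x =>
          min (M u x + if h u x ≠ f x then (1:ℝ) else 0) (c (u+1)) := by
        funext x; rw [hMrec u hu huT x, hNrec u hu huT x]
      have hb0 : (0:ℝ) ≤ b (u+1) := by rcases hb (u+1) with h' | h' <;> simp [h']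
      have hcu : c (u+1) = c u + b (u+1) := hcrec u hu huT
      refine ⟨?_, by rw [hcu]; linarith, ?_, ?_⟩
      · rw [hMeq]
        exact (hmeas.add (Measurable.ite (hSm u) measurable_const measurable_const)).min
          measurable_const
      · intro x; rw [hMeq]; simp only [le_min_iff]
        constructor
        · have := hM0 x; split <;> linarith
        · rw [hcu]; linarith
      · intro x; rw [hMeq]; exact min_le_right _ _
  obtain ⟨hMt_meas, hc0, hM0, hMc⟩ := key t ht1 (by omega)
  set S := {x | h t x ≠ f x} with hSdef
  have hS : MeasurableSet S := hSm t
  set g : X → ℝ := fun x => Real.exp (M t x - c t) with hg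
  have hg_meas : Measurable g := (hMt_meas.sub measurable_const).exp
  have hg_pos : ∀ x, 0 < g x := fun x => Real.exp_pos _
  have hg_le : ∀ x, g x ≤ 1 := fun x => by
    rw [hg]; rw [← Real.exp_zero]
    exact Real.exp_le_exp.mpr (by linarith [hMc x])
  have hg_int : Integrable g D := by
    refine Integrable.mono' (integrable_const 1) hg_meas.aestronglyMeasurable ?_
    refine ae_of_all _ fun x => ?_
    rw [Real.norm_eq_abs, abs_of_pos (hg_pos x)]; exact hg_le x
  set d : ℝ := ∫ y, g y ∂D with hd
  have hd_pos : 0 < d := by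
    have h1 : Real.exp (-(c t)) ≤ d := by
      have h2 : (fun _ : X => Real.exp (-(c t))) ≤ g := fun x => by
        rw [hg]; exact Real.exp_le_exp.mpr (by linarith [hM0 x])
      have := integral_mono (integrable_const (Real.exp (-(c t)))) hg_int h2
      simpa [hd] using this
    linarith [Real.exp_pos (-(c t))]
  have hfun : (fun x => ENNReal.ofReal (Real.exp (M t x - c t) /
      ∫ y, Real.exp (M t y - c t) ∂D)) = fun x => ENNReal.ofReal (g x / d) := rfl
  have hDμS : Dμ t S = ENNReal.ofReal ((∫ x in S, g x ∂D) / d) := by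
    rw [hDμ t, hfun, withDensity_apply _ hS,
      ← ofReal_integral_eq_lintegral_ofReal ((hg_int.div_const d).integrableOn)
        (ae_of_all _ fun x => div_nonneg (hg_pos x).le hd_pos.le),
      integral_div]
  have hDμS_toReal : (Dμ t S).toReal = (∫ x in S, g x ∂D) / d := by
    rw [hDμS, ENNReal.toReal_ofReal
      (div_nonneg (setIntegral_nonneg hS fun x _ => (hg_pos x).le) hd_pos.le)]
  have her0 : 0 ≤ (Dμ t S).toReal := ENNReal.toReal_nonneg
  have herε : (Dμ t S).toReal ≤ ε₀ := ENNReal.toReal_le_of_le_ofReal hε0.le her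
  have hSint : ∫ x in S, g x ∂D = d * (Dμ t S).toReal := by
    rw [hDμS_toReal]; field_simp
  have hgc : ∀ x, Real.exp (c t) * g x = Real.exp (M t x) := fun x => by
    rw [hg, ← Real.exp_add]; ring_nf
  have hNfun : (fun x => Real.exp (N (t+1) x)) =
      fun x => Real.exp (c t) * g x +
        S.indicator (fun x => (Real.exp 1 - 1) * (Real.exp (c t) * g x)) x := by
    funext x
    rw [hNrec t ht1 htT x]
    by_cases hx : h t x ≠ f x
    · rw [if_pos hx, Set.indicator_of_mem (by exact hx), Real.exp_add, hgc x]
      ring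
    · rw [if_neg hx, Set.indicator_of_notMem (by exact hx), hgc x]
      ring_nf
  have hInd_int : Integrable
      (fun x => S.indicator (fun x => (Real.exp 1 - 1) * (Real.exp (c t) * g x)) x) D :=
    ((hg_int.const_mul _).const_mul _).indicator hS
  have hmain : ∫ x, Real.exp (N (t+1) x) ∂D =
      Real.exp (c t) * d * ((Real.exp 1 - 1) * (Dμ t S).toReal + 1) := by
    rw [hNfun, integral_add (hg_int.const_mul _) hInd_int, integral_const_mul,
      integral_indicator hS, integral_const_mul, integral_const_mul, hSint, ← hd]
    ring
  have hMint : ∫ x, Real.exp (M t x) ∂D = Real.exp (c t) * d := by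
    rw [hd, ← integral_const_mul]
    exact integral_congr_ae (ae_of_all _ fun x => (hgc x).symm)
  constructor
  · rw [hmain, hMint]
    have he2 : Real.exp 1 - 1 ≤ 2 := by nlinarith [Real.exp_one_lt_d9]
    have he0 : (0:ℝ) ≤ Real.exp 1 - 1 := by nlinarith [Real.exp_one_gt_d9]
    have h1 : (Real.exp 1 - 1) * (Dμ t S).toReal + 1 ≤ Real.exp (2 * ε₀) := by
      have h2 : (Real.exp 1 - 1) * (Dμ t S).toReal + 1 ≤ 2 * ε₀ + 1 := by nlinarith
      have h3 : 2 * ε₀ + 1 ≤ Real.exp (2 * ε₀) := by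
        have := Real.add_one_le_exp (2 * ε₀); linarith
      linarith
    exact mul_le_mul_of_nonneg_left h1 (mul_nonneg (Real.exp_pos _).le hd_pos.le)
  · rw [hmain]
end

section
/- Let ε₀ ∈ (0,1). If er_{D_{μ_t}}(h_t) ≤ ε₀ for every t ∈ {1,…,T}, then E_{x∼D}[exp(M_{T+1}(x))] ≤ exp(2·T·ε₀). -/
open MeasureTheory

lemma bdd_integrable' {X : Type*} [MeasurableSpace X] (D : Measure X) [IsFiniteMeasure D]
    {g : X → ℝ} (hm : Measurable g) (C : ℝ) (hbd : ∀ x, ‖g x‖ ≤ C) : Integrable g D :=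
  ⟨hm.aestronglyMeasurable, HasFiniteIntegral.of_bounded (Filter.Eventually.of_forall hbd)⟩

/-- If `er_{D_{μ_t}}(h_t) ≤ ε₀` for every `t ∈ {1,…,T}`, then
`E_{x∼D}[exp(M_{T+1}(x))] ≤ exp(2·T·ε₀)`. -/
theorem rMetaBoost_potential_bound
    {X : Type*} [MeasurableSpace X]
    (D : Measure X) [IsProbabilityMeasure D]
    (f : X → ℝ) (hfm : Measurable f) (hfpm : ∀ x, f x = -1 ∨ f x = 1)
    (T : ℕ) (hT : 0 < T)
    (h : ℕ → X → ℝ) (hhm : ∀ t, Measurable (h t)) (hhpm : ∀ t x, h t x = -1 ∨ h t x = 1)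
    (b : ℕ → ℝ) (hb : ∀ t, b t = 0 ∨ b t = 1)
    (c : ℕ → ℝ) (N M : ℕ → X → ℝ)
    (hc1 : c 1 = 0) (hN1 : ∀ x, N 1 x = 0) (hM1 : ∀ x, M 1 x = 0)
    (hcrec : ∀ t, 1 ≤ t → t ≤ T → c (t + 1) = c t + b (t + 1))
    (hNrec : ∀ t, 1 ≤ t → t ≤ T → ∀ x,
      N (t + 1) x = M t x + if h t x ≠ f x then 1 else 0)
    (hMrec : ∀ t, 1 ≤ t → t ≤ T → ∀ x, M (t + 1) x = min (N (t + 1) x) (c (t + 1)))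
    (Dμ : ℕ → Measure X)
    (hDμ : ∀ t, Dμ t = D.withDensity fun x =>
      ENNReal.ofReal (Real.exp (M t x - c t) / ∫ y, Real.exp (M t y - c t) ∂D))
    (ε₀ : ℝ) (hε₀ : ε₀ ∈ Set.Ioo (0 : ℝ) 1)
    (her : ∀ t, 1 ≤ t → t ≤ T → Dμ t {x | h t x ≠ f x} ≤ ENNReal.ofReal ε₀) :
    ∫ x, Real.exp (M (T + 1) x) ∂D ≤ Real.exp (2 * T * ε₀) := by
  obtain ⟨hε₀pos, hε₀lt⟩ := hε₀
  have key : ∀ t, 1 ≤ t → t ≤ T + 1 →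
      Measurable (M t) ∧ (∀ x, 0 ≤ M t x ∧ M t x ≤ c t) ∧ 0 ≤ c t ∧
      ∫ x, Real.exp (M t x) ∂D ≤ Real.exp (2 * ((t : ℝ) - 1) * ε₀) := by
    intro t ht1
    induction t, ht1 using Nat.le_induction with
    | base =>
      intro _
      refine ⟨?_, ?_, by rw [hc1], ?_⟩
      · have hh : M 1 = fun _ => (0 : ℝ) := funext hM1
        rw [hh]; exact measurable_const
      · intro x; rw [hM1 x, hc1]; simp
      · simp only [hM1, Real.exp_zero]
        simp
    | succ t ht ih =>
      intro htT1
      have htT : t ≤ T := by omega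
      obtain ⟨hMm, hMb, hc0, hΦ⟩ := ih (by omega)
      set S : Set X := {x | h t x ≠ f x} with hSdef
      have hS : MeasurableSet S := (measurableSet_eq_fun (hhm t) hfm).compl
      have hMeq : M (t + 1) =
          fun x => min (M t x + (if h t x ≠ f x then (1 : ℝ) else 0)) (c (t + 1)) := by
        funext x; rw [hMrec t ht htT x, hNrec t ht htT x]
      have hInd : Measurable (fun x => (if h t x ≠ f x then (1 : ℝ) else 0)) :=
        Measurable.ite hS measurable_const measurable_const
      have hMm' : Measurable (M (t + 1)) := by
        rw [hMeq]; exact (hMm.add hInd).min measurable_const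
      have hbnn : 0 ≤ b (t + 1) := by rcases hb (t + 1) with h0 | h0 <;> simp [h0]
      have hc0' : 0 ≤ c (t + 1) := by rw [hcrec t ht htT]; linarith
      have hMb' : ∀ x, 0 ≤ M (t + 1) x ∧ M (t + 1) x ≤ c (t + 1) := by
        intro x
        rw [hMeq]
        refine ⟨le_min ?_ hc0', min_le_right _ _⟩
        have h1 : (0 : ℝ) ≤ if h t x ≠ f x then (1 : ℝ) else 0 := by split <;> norm_num
        have := (hMb x).1
        linarith
      -- pointwise bound
      have hpt : ∀ x, Real.exp (M (t + 1) x) ≤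
          Real.exp (M t x) + (Real.exp 1 - 1) * S.indicator (fun x => Real.exp (M t x)) x := by
        intro x
        rw [hMeq]
        by_cases hx : x ∈ S
        · rw [Set.indicator_of_mem hx]
          have hx' : h t x ≠ f x := hx
          have h1 : min (M t x + (if h t x ≠ f x then (1 : ℝ) else 0)) (c (t + 1)) ≤
              M t x + 1 := by
            rw [if_pos hx']; exact min_le_left _ _
          calc Real.exp _ ≤ Real.exp (M t x + 1) := Real.exp_le_exp.mpr h1
            _ = Real.exp (M t x) + (Real.exp 1 - 1) * Real.exp (M t x) := by
                rw [Real.exp_add]; ring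
        · rw [Set.indicator_of_notMem hx]
          have hx' : ¬ h t x ≠ f x := hx
          have h1 : min (M t x + (if h t x ≠ f x then (1 : ℝ) else 0)) (c (t + 1)) ≤ M t x := by
            rw [if_neg hx', add_zero]; exact min_le_left _ _
          have h2 := Real.exp_le_exp.mpr h1
          simp only [mul_zero, add_zero]
          exact h2
      have hEm : Measurable (fun x => Real.exp (M t x)) := Real.measurable_exp.comp hMm
      have hEint : Integrable (fun x => Real.exp (M t x)) D :=
        bdd_integrable' D hEm (Real.exp (c t)) (fun x => by
          rw [Real.norm_eq_abs, abs_of_pos (Real.exp_pos _)]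
          exact Real.exp_le_exp.mpr (hMb x).2)
      have hgeq : (fun x => Real.exp (M t x - c t)) =
          fun x => Real.exp (M t x) / Real.exp (c t) := by
        funext x; rw [Real.exp_sub]
      have hgint : Integrable (fun x => Real.exp (M t x - c t)) D := by
        rw [hgeq]; exact hEint.div_const _
      have hZ : (∫ y, Real.exp (M t y - c t) ∂D) =
          (∫ x, Real.exp (M t x) ∂D) / Real.exp (c t) := by
        rw [hgeq, integral_div]
      have hEpos : (1 : ℝ) ≤ ∫ x, Real.exp (M t x) ∂D := by
        calc (1 : ℝ) = ∫ _x, (1 : ℝ) ∂D := by simp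
          _ ≤ _ := integral_mono (integrable_const 1) hEint (fun x => by
              simpa [Real.exp_zero] using Real.exp_le_exp.mpr (hMb x).1)
      have hZpos : 0 < ∫ y, Real.exp (M t y - c t) ∂D := by
        rw [hZ]; exact div_pos (by linarith) (Real.exp_pos _)
      -- from the error bound
      have her' : ∫ x in S, Real.exp (M t x - c t) / (∫ y, Real.exp (M t y - c t) ∂D) ∂D ≤ ε₀ := by
        have h1 := her t ht htT
        rw [hDμ t, withDensity_apply _ hS] at h1
        rw [← ofReal_integral_eq_lintegral_ofReal ((hgint.div_const _).restrict)
          (Filter.Eventually.of_forall fun x =>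
            div_nonneg (Real.exp_pos _).le hZpos.le)] at h1
        exact (ENNReal.ofReal_le_ofReal_iff hε₀pos.le).mp h1
      have hSkey : ∫ x in S, Real.exp (M t x) ∂D ≤ ε₀ * ∫ x, Real.exp (M t x) ∂D := by
        have hEne : (∫ x, Real.exp (M t x) ∂D) ≠ 0 := by linarith
        have hptw : ∀ x, Real.exp (M t x - c t) / (∫ y, Real.exp (M t y - c t) ∂D) =
            Real.exp (M t x) / (∫ x, Real.exp (M t x) ∂D) := by
          intro x
          rw [Real.exp_sub, hZ]
          rw [div_div_div_cancel_right₀]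
          exact Real.exp_ne_zero _
        have h2 : ∫ x in S, Real.exp (M t x - c t) / (∫ y, Real.exp (M t y - c t) ∂D) ∂D =
            (∫ x in S, Real.exp (M t x) ∂D) / (∫ x, Real.exp (M t x) ∂D) := by
          simp_rw [hptw]
          rw [integral_div]
        rw [h2] at her'
        have hpos : (0 : ℝ) < ∫ x, Real.exp (M t x) ∂D := by linarith
        calc ∫ x in S, Real.exp (M t x) ∂D
            = ((∫ x in S, Real.exp (M t x) ∂D) / (∫ x, Real.exp (M t x) ∂D)) *
              (∫ x, Real.exp (M t x) ∂D) := by field_simp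
          _ ≤ ε₀ * ∫ x, Real.exp (M t x) ∂D :=
              mul_le_mul_of_nonneg_right her' hpos.le
      have hSnn : 0 ≤ ∫ x in S, Real.exp (M t x) ∂D :=
        integral_nonneg fun x => (Real.exp_pos _).le
      have hE1int : Integrable (fun x => Real.exp (M (t + 1) x)) D :=
        bdd_integrable' D (Real.measurable_exp.comp hMm') (Real.exp (c (t + 1))) (fun x => by
          rw [Real.norm_eq_abs, abs_of_pos (Real.exp_pos _)]
          exact Real.exp_le_exp.mpr (hMb' x).2)
      have hIint : Integrable (fun x =>
          (Real.exp 1 - 1) * S.indicator (fun x => Real.exp (M t x)) x) D :=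
        (hEint.indicator hS).const_mul _
      refine ⟨hMm', hMb', hc0', ?_⟩
      have step1 : ∫ x, Real.exp (M (t + 1) x) ∂D ≤
          (∫ x, Real.exp (M t x) ∂D) +
            (Real.exp 1 - 1) * ∫ x in S, Real.exp (M t x) ∂D := by
        calc ∫ x, Real.exp (M (t + 1) x) ∂D
            ≤ ∫ x, (Real.exp (M t x) +
                (Real.exp 1 - 1) * S.indicator (fun x => Real.exp (M t x)) x) ∂D :=
              integral_mono hE1int (hEint.add hIint) hpt
          _ = (∫ x, Real.exp (M t x) ∂D) +
              (Real.exp 1 - 1) * ∫ x in S, Real.exp (M t x) ∂D := by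
              rw [integral_add hEint hIint, integral_const_mul, integral_indicator hS]
      have he1 : Real.exp 1 ≤ 3 := by
        have := Real.exp_one_lt_d9; linarith
      have he2 : (1 : ℝ) ≤ Real.exp 1 := by
        have := Real.exp_one_gt_d9; linarith
      have hEub : ∫ x, Real.exp (M t x) ∂D ≤ Real.exp (2 * ((t : ℝ) - 1) * ε₀) := hΦ
      have step2 : (∫ x, Real.exp (M t x) ∂D) +
          (Real.exp 1 - 1) * ∫ x in S, Real.exp (M t x) ∂D ≤
          (1 + 2 * ε₀) * ∫ x, Real.exp (M t x) ∂D := by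
        nlinarith [hSkey, hSnn, hEpos]
      have step3 : (1 + 2 * ε₀) * ∫ x, Real.exp (M t x) ∂D ≤
          Real.exp (2 * ((t : ℝ) + 1 - 1) * ε₀) := by
        have h1 : (1 + 2 * ε₀) ≤ Real.exp (2 * ε₀) := by
          have := Real.add_one_le_exp (2 * ε₀); linarith
        calc (1 + 2 * ε₀) * ∫ x, Real.exp (M t x) ∂D
            ≤ Real.exp (2 * ε₀) * Real.exp (2 * ((t : ℝ) - 1) * ε₀) :=
              mul_le_mul h1 hEub (by linarith) (Real.exp_pos _).le
          _ = Real.exp (2 * ((t : ℝ) + 1 - 1) * ε₀) := by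
              rw [← Real.exp_add]; ring_nf
      have : ((t + 1 : ℕ) : ℝ) = (t : ℝ) + 1 := by push_cast; ring
      rw [this]
      linarith [step1, step2, step3]
  have := (key (T + 1) (by omega) le_rfl).2.2.2
  have hc : ((T + 1 : ℕ) : ℝ) - 1 = (T : ℝ) := by push_cast; ring
  rwa [hc] at this
end

section
/- Suppose er_{D_{μ_t}}(h_t) ≤ 1/16 for every t ∈ {1,…,T}. Then P_{x∼D}[M_{T+1}(x) ≥ T/4] ≤ exp(−T/8). In particular, if ε ∈ (0,1) and T ≥ 8·log(2/ε), then P_{x∼D}[M_{T+1}(x) ≥ T/4] ≤ ε/2. -/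
open MeasureTheory

/-- If `er_{D_{μ_t}}(h_t) ≤ 1/16` for every `t ∈ {1,…,T}`, then
`P_{x∼D}[M_{T+1}(x) ≥ T/4] ≤ exp(−T/8)`; in particular, if `ε ∈ (0,1)` and
`T ≥ 8·log(2/ε)`, then `P_{x∼D}[M_{T+1}(x) ≥ T/4] ≤ ε/2`. -/
theorem rMetaBoost_large_potential_improbable
    {X : Type*} [MeasurableSpace X]
    (D : Measure X) [IsProbabilityMeasure D]
    (f : X → ℝ) (hfm : Measurable f) (hfpm : ∀ x, f x = -1 ∨ f x = 1)
    (T : ℕ) (hT : 0 < T)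
    (h : ℕ → X → ℝ) (hhm : ∀ t, Measurable (h t)) (hhpm : ∀ t x, h t x = -1 ∨ h t x = 1)
    (b : ℕ → ℝ) (hb : ∀ t, b t = 0 ∨ b t = 1)
    (c : ℕ → ℝ) (N M : ℕ → X → ℝ)
    (hc1 : c 1 = 0) (hN1 : ∀ x, N 1 x = 0) (hM1 : ∀ x, M 1 x = 0)
    (hcrec : ∀ t, 1 ≤ t → t ≤ T → c (t + 1) = c t + b (t + 1))
    (hNrec : ∀ t, 1 ≤ t → t ≤ T → ∀ x,
      N (t + 1) x = M t x + if h t x ≠ f x then 1 else 0)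
    (hMrec : ∀ t, 1 ≤ t → t ≤ T → ∀ x, M (t + 1) x = min (N (t + 1) x) (c (t + 1)))
    (Dμ : ℕ → Measure X)
    (hDμ : ∀ t, Dμ t = D.withDensity fun x =>
      ENNReal.ofReal (Real.exp (M t x - c t) / ∫ y, Real.exp (M t y - c t) ∂D))
    (her : ∀ t, 1 ≤ t → t ≤ T → Dμ t {x | h t x ≠ f x} ≤ ENNReal.ofReal (1 / 16)) :
    (D {x | (T : ℝ) / 4 ≤ M (T + 1) x} ≤ ENNReal.ofReal (Real.exp (-(T : ℝ) / 8))) ∧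
      (∀ ε : ℝ, ε ∈ Set.Ioo (0 : ℝ) 1 → 8 * Real.log (2 / ε) ≤ (T : ℝ) →
        D {x | (T : ℝ) / 4 ≤ M (T + 1) x} ≤ ENNReal.ofReal (ε / 2)) := by
  classical
  -- integrability of bounded nonnegative measurable functions
  have hint : ∀ (g : X → ℝ), Measurable g → (∀ x, 0 ≤ g x) → ∀ C : ℝ, (∀ x, g x ≤ C) →
      Integrable g D := by
    intro g hm h0 C hC
    refine (integrable_const C).mono' hm.aestronglyMeasurable ?_
    filter_upwards with x
    rw [Real.norm_eq_abs, abs_of_nonneg (h0 x)]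
    exact hC x
  have herrMeas : ∀ t, MeasurableSet {x | h t x ≠ f x} := fun t =>
    (measurableSet_eq_fun (hhm t) hfm).compl
  -- the key induction
  have main : ∀ s, s ≤ T → Measurable (M (s + 1)) ∧
      (∀ x, 0 ≤ M (s + 1) x ∧ M (s + 1) x ≤ c (s + 1)) ∧ 0 ≤ c (s + 1) ∧
      (∫ x, Real.exp (M (s + 1) x) ∂D) ≤ Real.exp ((s : ℝ) / 8) := by
    intro s
    induction s with
    | zero =>
      intro _
      have hM1' : M 1 = fun _ => (0 : ℝ) := funext hM1
      refine ⟨by rw [hM1']; exact measurable_const, ?_, by rw [hc1], ?_⟩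
      · intro x; rw [hM1 x, hc1]; exact ⟨le_refl _, le_refl _⟩
      · rw [hM1']
        simp
    | succ s ih =>
      intro hsT
      obtain ⟨Mmeas, hbd, hc0, hI⟩ := ih (by omega)
      have ht1 : 1 ≤ s + 1 := by omega
      have htT : s + 1 ≤ T := by omega
      have hM2x : ∀ x, M (s + 2) x =
          min (M (s + 1) x + (if h (s + 1) x ≠ f x then (1 : ℝ) else 0)) (c (s + 2)) := by
        intro x
        rw [hMrec (s + 1) ht1 htT x, hNrec (s + 1) ht1 htT x]
      have hMt1 : M (s + 2) = fun x =>
          min (M (s + 1) x + (if h (s + 1) x ≠ f x then (1 : ℝ) else 0)) (c (s + 2)) :=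
        funext hM2x
      have hc2 : c (s + 2) = c (s + 1) + b (s + 2) := hcrec (s + 1) ht1 htT
      have hb2 : 0 ≤ b (s + 2) := by rcases hb (s + 2) with h' | h' <;> rw [h'] <;> norm_num
      have hc2nn : 0 ≤ c (s + 2) := by rw [hc2]; linarith
      have hM2meas : Measurable (M (s + 2)) := by
        rw [hMt1]
        exact (Mmeas.add (Measurable.ite (herrMeas (s + 1)) measurable_const
          measurable_const)).min measurable_const
      have hM2bd : ∀ x, 0 ≤ M (s + 2) x ∧ M (s + 2) x ≤ c (s + 2) := by
        intro x
        rw [hM2x x]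
        constructor
        · refine le_min (add_nonneg (hbd x).1 ?_) hc2nn
          split <;> norm_num
        · exact min_le_right _ _
      refine ⟨hM2meas, hM2bd, hc2nn, ?_⟩
      -- translate the weak-learning hypothesis
      set E := {x | h (s + 1) x ≠ f x} with hE
      set g : X → ℝ := fun x => Real.exp (M (s + 1) x - c (s + 1)) with hgdef
      have hgmeas : Measurable g := Real.measurable_exp.comp (Mmeas.sub measurable_const)
      have hg0 : ∀ x, 0 < g x := fun x => Real.exp_pos _
      have hg1 : ∀ x, g x ≤ 1 := fun x =>
        Real.exp_le_one_iff.2 (by linarith [(hbd x).2])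
      have hgInt : Integrable g D := hint g hgmeas (fun x => (hg0 x).le) 1 hg1
      set d : ℝ := ∫ y, Real.exp (M (s + 1) y - c (s + 1)) ∂D with hddef
      have hdg : d = ∫ y, g y ∂D := rfl
      have hd_lb : Real.exp (-(c (s + 1))) ≤ d := by
        rw [hdg]
        have := integral_mono (integrable_const (Real.exp (-(c (s + 1))))) hgInt
          (fun x => Real.exp_le_exp.2 (by linarith [(hbd x).1]))
        simpa using this
      have hd_pos : 0 < d := lt_of_lt_of_le (Real.exp_pos _) hd_lb
      have hwk := her (s + 1) ht1 htT
      rw [hDμ (s + 1)] at hwk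
      have hwd : (D.withDensity fun x => ENNReal.ofReal (g x / d)) E =
          ENNReal.ofReal (∫ x in E, g x / d ∂D) := by
        rw [withDensity_apply _ (herrMeas (s + 1)),
          ← ofReal_integral_eq_lintegral_ofReal ((hgInt.div_const d).restrict)
            (Filter.Eventually.of_forall fun x => div_nonneg (hg0 x).le hd_pos.le)]
      rw [show (D.withDensity fun x =>
          ENNReal.ofReal (Real.exp (M (s + 1) x - c (s + 1)) /
            ∫ y, Real.exp (M (s + 1) y - c (s + 1)) ∂D)) =
          D.withDensity fun x => ENNReal.ofReal (g x / d) from rfl, hwd] at hwk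
      have hA : (∫ x in E, g x / d ∂D) ≤ 1 / 16 :=
        (ENNReal.ofReal_le_ofReal_iff (by norm_num)).mp hwk
      rw [integral_div] at hA
      have hEg : (∫ x in E, g x ∂D) ≤ d / 16 := by
        rw [div_le_div_iff₀ hd_pos (by norm_num : (0:ℝ) < 16)] at hA
        linarith
      -- convert to integrals of exp (M (s+1))
      set F : X → ℝ := fun x => Real.exp (M (s + 1) x) with hFdef
      have hgF : ∀ x, g x = F x * Real.exp (-(c (s + 1))) := by
        intro x
        rw [hgdef, hFdef, ← Real.exp_add]
        ring_nf
      have hEgF : (∫ x in E, g x ∂D) = (∫ x in E, F x ∂D) * Real.exp (-(c (s + 1))) := by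
        simp_rw [hgF]
        rw [integral_mul_const]
      have hdF : d = (∫ x, F x ∂D) * Real.exp (-(c (s + 1))) := by
        rw [hdg]
        simp_rw [hgF]
        rw [integral_mul_const]
      have hEF : (∫ x in E, F x ∂D) ≤ (∫ x, F x ∂D) / 16 := by
        rw [hEgF, hdF] at hEg
        have h16 : ((∫ x, F x ∂D) * Real.exp (-(c (s + 1)))) / 16 =
            ((∫ x, F x ∂D) / 16) * Real.exp (-(c (s + 1))) := by ring
        rw [h16] at hEg
        exact le_of_mul_le_mul_right hEg (Real.exp_pos _)
      -- pointwise bound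
      have hpt : ∀ x, Real.exp (M (s + 2) x) ≤
          F x + (Real.exp 1 - 1) * Set.indicator E F x := by
        intro x
        rw [hM2x x]
        by_cases hx : h (s + 1) x ≠ f x
        · rw [if_pos hx, Set.indicator_of_mem (show x ∈ E from hx) F]
          have h1 : Real.exp (min (M (s + 1) x + 1) (c (s + 2))) ≤
              Real.exp (M (s + 1) x + 1) := Real.exp_le_exp.2 (min_le_left _ _)
          have h2 : Real.exp (M (s + 1) x + 1) = F x * Real.exp 1 := Real.exp_add _ _
          have h3 : F x + (Real.exp 1 - 1) * F x = F x * Real.exp 1 := by ring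
          rw [h3, ← h2]
          exact h1
        · rw [if_neg hx, Set.indicator_of_notMem (show x ∉ E from hx) F, add_zero]
          have h1 : Real.exp (min (M (s + 1) x) (c (s + 2))) ≤ F x :=
            Real.exp_le_exp.2 (min_le_left _ _)
          linarith
      -- integrate
      have hFmeas : Measurable F := Real.measurable_exp.comp Mmeas
      have hFint : Integrable F D := hint F hFmeas (fun x => (Real.exp_pos _).le)
        (Real.exp (c (s + 1))) (fun x => Real.exp_le_exp.2 (hbd x).2)
      have hIndInt : Integrable (fun x => Set.indicator E F x) D :=
        hFint.indicator (herrMeas (s + 1))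
      have hExpM2int : Integrable (fun x => Real.exp (M (s + 2) x)) D :=
        hint _ (Real.measurable_exp.comp hM2meas) (fun x => (Real.exp_pos _).le)
          (Real.exp (c (s + 2))) (fun x => Real.exp_le_exp.2 (hM2bd x).2)
      have hstep : (∫ x, Real.exp (M (s + 2) x) ∂D) ≤
          (∫ x, F x ∂D) + (Real.exp 1 - 1) * (∫ x in E, F x ∂D) := by
        calc (∫ x, Real.exp (M (s + 2) x) ∂D)
            ≤ ∫ x, (F x + (Real.exp 1 - 1) * Set.indicator E F x) ∂D :=
              integral_mono hExpM2int (hFint.add (hIndInt.const_mul _)) hpt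
          _ = (∫ x, F x ∂D) + (Real.exp 1 - 1) * (∫ x, Set.indicator E F x ∂D) := by
              rw [integral_add hFint (hIndInt.const_mul _), integral_const_mul]
          _ = (∫ x, F x ∂D) + (Real.exp 1 - 1) * (∫ x in E, F x ∂D) := by
              rw [integral_indicator (herrMeas (s + 1))]
      have hepos : (0 : ℝ) ≤ Real.exp 1 - 1 := by
        have := Real.add_one_le_exp (1 : ℝ)
        linarith
      have hFnn : 0 ≤ ∫ x, F x ∂D := integral_nonneg fun x => (Real.exp_pos _).le
      have hfac : 1 + (Real.exp 1 - 1) / 16 ≤ Real.exp (1 / 8 : ℝ) := by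
        have h1 : (Real.exp 1 - 1) / 16 + 1 ≤ Real.exp ((Real.exp 1 - 1) / 16) :=
          Real.add_one_le_exp _
        have h2 : Real.exp 1 < 3 := lt_trans Real.exp_one_lt_d9 (by norm_num)
        have h3 : (Real.exp 1 - 1) / 16 ≤ 1 / 8 := by linarith
        calc 1 + (Real.exp 1 - 1) / 16 ≤ Real.exp ((Real.exp 1 - 1) / 16) := by linarith
          _ ≤ Real.exp (1 / 8) := Real.exp_le_exp.2 h3
      calc (∫ x, Real.exp (M (s + 2) x) ∂D)
          ≤ (∫ x, F x ∂D) + (Real.exp 1 - 1) * (∫ x in E, F x ∂D) := hstep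
        _ ≤ (∫ x, F x ∂D) + (Real.exp 1 - 1) * ((∫ x, F x ∂D) / 16) := by
            have := mul_le_mul_of_nonneg_left hEF hepos
            linarith
        _ = (∫ x, F x ∂D) * (1 + (Real.exp 1 - 1) / 16) := by ring
        _ ≤ Real.exp ((s : ℝ) / 8) * Real.exp (1 / 8) := by
            apply mul_le_mul hI hfac (by positivity) (Real.exp_pos _).le
        _ = Real.exp (((s : ℕ) + 1 : ℝ) / 8) := by
            rw [← Real.exp_add]
            ring_nf
        _ = Real.exp (((s + 1 : ℕ) : ℝ) / 8) := by push_cast; ring_nf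
  -- extract the final bound
  obtain ⟨MTmeas, hTbd, _, hIT⟩ := main T le_rfl
  set S := {x | (T : ℝ) / 4 ≤ M (T + 1) x} with hS
  have hExpInt : Integrable (fun x => Real.exp (M (T + 1) x)) D :=
    hint _ (Real.measurable_exp.comp MTmeas) (fun x => (Real.exp_pos _).le)
      (Real.exp (c (T + 1))) (fun x => Real.exp_le_exp.2 (hTbd x).2)
  have hmk := mul_meas_ge_le_lintegral₀
    ((Real.measurable_exp.comp MTmeas).ennreal_ofReal.aemeasurable (μ := D))
    (ENNReal.ofReal (Real.exp ((T : ℝ) / 4)))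
  simp only [Function.comp_apply] at hmk
  have hseteq : {x | ENNReal.ofReal (Real.exp ((T : ℝ) / 4)) ≤
      ENNReal.ofReal (Real.exp (M (T + 1) x))} = S := by
    ext x
    simp only [Set.mem_setOf_eq, hS,
      ENNReal.ofReal_le_ofReal_iff (Real.exp_pos (M (T + 1) x)).le, Real.exp_le_exp]
  rw [hseteq] at hmk
  have hlin : (∫⁻ x, ENNReal.ofReal (Real.exp (M (T + 1) x)) ∂D) =
      ENNReal.ofReal (∫ x, Real.exp (M (T + 1) x) ∂D) :=
    (ofReal_integral_eq_lintegral_ofReal hExpInt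
      (Filter.Eventually.of_forall fun x => (Real.exp_pos _).le)).symm
  have hmk2 : ENNReal.ofReal (Real.exp ((T : ℝ) / 4)) * D S ≤
      ENNReal.ofReal (Real.exp ((T : ℝ) / 8)) := by
    refine le_trans hmk ?_
    rw [hlin]
    exact ENNReal.ofReal_le_ofReal hIT
  have hfirst : D S ≤ ENNReal.ofReal (Real.exp (-(T : ℝ) / 8)) := by
    have hne0 : ENNReal.ofReal (Real.exp ((T : ℝ) / 4)) ≠ 0 := by
      simp [ENNReal.ofReal_eq_zero, not_le, Real.exp_pos]
    have h1 : D S ≤ ENNReal.ofReal (Real.exp ((T : ℝ) / 8)) /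
        ENNReal.ofReal (Real.exp ((T : ℝ) / 4)) := by
      rw [ENNReal.le_div_iff_mul_le (Or.inl hne0) (Or.inl ENNReal.ofReal_ne_top)]
      rw [mul_comm]
      exact hmk2
    refine le_trans h1 ?_
    rw [← ENNReal.ofReal_div_of_pos (Real.exp_pos _), ← Real.exp_sub]
    apply ENNReal.ofReal_le_ofReal
    apply le_of_eq
    congr 1
    ring
  refine ⟨hfirst, ?_⟩
  intro ε hε hTε
  obtain ⟨hε0, hε1⟩ := hε
  refine le_trans hfirst (ENNReal.ofReal_le_ofReal ?_)
  have hlog : Real.log (2 / ε) ≤ (T : ℝ) / 8 := by linarith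
  have h2ε : (0 : ℝ) < 2 / ε := by positivity
  calc Real.exp (-(T : ℝ) / 8) ≤ Real.exp (-Real.log (2 / ε)) := by
        apply Real.exp_le_exp.2
        linarith
    _ = (2 / ε)⁻¹ := by rw [Real.exp_neg, Real.exp_log h2ε]
    _ = ε / 2 := by rw [inv_div]
end

section
/- Let ε ∈ (0,1) and assume that for every t ∈ {1,…,T}: if b_{t+1} = 0 then P_{x∼D}[N_{t+1}(x) = c_t + 1] ≤ ε/8. Define B = {x ∈ X : M_{T+1}(x) < T/4 and H(x) ≠ f(x)}. Then P_{x∼D}[x ∈ B] ≤ ε/2. -/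
open MeasureTheory Finset
open scoped ENNReal

/-- If for every `t ∈ {1,…,T}`, `b_{t+1} = 0` implies `P_{x∼D}[N_{t+1}(x) = c_t+1] ≤ ε/8`,
then the set `B = {x : M_{T+1}(x) < T/4 and H(x) ≠ f(x)}` (where `H = sign(∑_t h_t)` with a
fixed tie-breaking convention) satisfies `P_{x∼D}[x ∈ B] ≤ ε/2`. -/
theorem rMetaBoost_capped_misclassified_mass
    {X : Type*} [MeasurableSpace X]
    (D : Measure X) [IsProbabilityMeasure D]
    (f : X → ℝ) (hfm : Measurable f) (hfpm : ∀ x, f x = -1 ∨ f x = 1)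
    (T : ℕ) (hT : 0 < T)
    (h : ℕ → X → ℝ) (hhm : ∀ t, Measurable (h t)) (hhpm : ∀ t x, h t x = -1 ∨ h t x = 1)
    (b : ℕ → ℝ) (hb : ∀ t, b t = 0 ∨ b t = 1)
    (c : ℕ → ℝ) (N M : ℕ → X → ℝ)
    (hc1 : c 1 = 0) (hN1 : ∀ x, N 1 x = 0) (hM1 : ∀ x, M 1 x = 0)
    (hcrec : ∀ t, 1 ≤ t → t ≤ T → c (t + 1) = c t + b (t + 1))
    (hNrec : ∀ t, 1 ≤ t → t ≤ T → ∀ x,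
      N (t + 1) x = M t x + if h t x ≠ f x then 1 else 0)
    (hMrec : ∀ t, 1 ≤ t → t ≤ T → ∀ x, M (t + 1) x = min (N (t + 1) x) (c (t + 1)))
    (ε : ℝ) (hε : ε ∈ Set.Ioo (0 : ℝ) 1)
    (hthr : ∀ t, 1 ≤ t → t ≤ T → b (t + 1) = 0 →
      D {x | N (t + 1) x = c t + 1} ≤ ENNReal.ofReal (ε / 8))
    (H : X → ℝ)
    (hH : ∀ x, H x = if 0 < ∑ t ∈ Finset.Icc 1 T, h t x then 1 else -1) :
    D {x | M (T + 1) x < (T : ℝ) / 4 ∧ H x ≠ f x} ≤ ENNReal.ofReal (ε / 2) := by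
  classical
  obtain ⟨hε0, hε1⟩ := hε
  -- measurability of the error indicator
  have hind : ∀ t : ℕ, Measurable fun x => if h t x ≠ f x then (1:ℝ) else 0 := by
    intro t
    have hs : MeasurableSet {x | h t x = f x} := measurableSet_eq_fun (hhm t) hfm
    have heq : (fun x => if h t x ≠ f x then (1:ℝ) else 0)
        = fun x => if x ∈ {x | h t x = f x} then (0:ℝ) else 1 := by
      funext x; by_cases hx : h t x = f x <;> simp [hx]
    rw [heq]
    exact Measurable.ite hs measurable_const measurable_const
  -- measurability of M (t+1), N (t+1)
  have hmeas : ∀ t, t ≤ T → Measurable (M (t+1)) ∧ Measurable (N (t+1)) := by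
    intro t
    induction t with
    | zero =>
      intro _
      refine ⟨?_, ?_⟩
      · have : M 1 = fun _ => (0:ℝ) := funext hM1
        rw [this]; exact measurable_const
      · have : N 1 = fun _ => (0:ℝ) := funext hN1
        rw [this]; exact measurable_const
    | succ t ih =>
      intro hle
      obtain ⟨hM, -⟩ := ih (Nat.le_of_succ_le hle)
      have h1 : 1 ≤ t + 1 := Nat.le_add_left 1 t
      have hN2 : Measurable (N (t+2)) := by
        have : N (t+2) = fun x => M (t+1) x + if h (t+1) x ≠ f x then 1 else 0 :=
          funext (hNrec (t+1) h1 hle)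
        rw [this]; exact hM.add (hind (t+1))
      refine ⟨?_, hN2⟩
      have : M (t+2) = fun x => min (N (t+2) x) (c (t+2)) :=
        funext (hMrec (t+1) h1 hle)
      rw [this]; exact hN2.min measurable_const
  -- the capping-event sets
  set A : ℕ → Set X := fun t => if b (t+1) = 0 then {x | N (t+1) x = c t + 1} else ∅ with hA
  have hAmeas : ∀ t, 1 ≤ t → t ≤ T → MeasurableSet (A t) := by
    intro t h1 h2
    rw [hA]
    by_cases hbt : b (t+1) = 0
    · simp only [hbt, if_pos rfl]
      exact measurableSet_eq_fun (hmeas t h2).2 measurable_const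
    · simp [hbt]
  have hAsmall : ∀ t ∈ Icc 1 T, D (A t) ≤ ENNReal.ofReal (ε/8) := by
    intro t ht
    rw [mem_Icc] at ht
    rw [hA]
    by_cases hbt : b (t+1) = 0
    · simpa [hbt] using hthr t ht.1 ht.2 hbt
    · simp [hbt]
  -- main invariant
  have key : ∀ x, ∀ t, t ≤ T →
      (∃ m : ℕ, M (t+1) x = m) ∧ (∃ k : ℕ, c (t+1) = k) ∧ M (t+1) x ≤ c (t+1) ∧
      M (t+1) x = ((((Icc 1 t).filter fun s => h s x ≠ f x).card : ℝ)
        - (((Icc 1 t).filter fun s => b (s+1) = 0 ∧ N (s+1) x = c s + 1).card : ℝ)) := by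
    intro x t
    induction t with
    | zero =>
      intro _
      refine ⟨⟨0, by simp [hM1]⟩, ⟨0, by simp [hc1]⟩, by simp [hM1, hc1], by simp [hM1]⟩
    | succ t ih =>
      intro hle
      obtain ⟨⟨m, hm⟩, ⟨k, hk⟩, hmk, hform⟩ := ih (Nat.le_of_succ_le hle)
      have h1 : 1 ≤ t + 1 := Nat.le_add_left 1 t
      have hN : N (t+2) x = M (t+1) x + if h (t+1) x ≠ f x then 1 else 0 :=
        hNrec (t+1) h1 hle x
      have hc' : c (t+2) = c (t+1) + b (t+2) := hcrec (t+1) h1 hle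
      have hM' : M (t+2) x = min (N (t+2) x) (c (t+2)) := hMrec (t+1) h1 hle x
      have hIcc : Icc 1 (t+1) = insert (t+1) (Icc 1 t) := (Finset.insert_Icc_right_eq_Icc_add_one h1).symm
      have hnot : (t+1) ∉ Icc 1 t := by simp
      -- card update for a predicate p
      have hcard : ∀ (p : ℕ → Prop) [DecidablePred p],
          (((Icc 1 (t+1)).filter p).card : ℝ)
            = (((Icc 1 t).filter p).card : ℝ) + (if p (t+1) then 1 else 0) := by
        intro p _
        rw [hIcc, filter_insert]
        by_cases hp : p (t+1)
        · rw [if_pos hp, if_pos hp, card_insert_of_notMem (fun hmem => hnot (mem_of_mem_filter _ hmem))]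
          push_cast; ring
        · rw [if_neg hp, if_neg hp]; ring
      have hW := hcard (fun s => h s x ≠ f x)
      have hK := hcard (fun s => b (s+1) = 0 ∧ N (s+1) x = c s + 1)
      set W : ℝ := (((Icc 1 t).filter fun s => h s x ≠ f x).card : ℝ) with hWdef
      set K : ℝ := (((Icc 1 t).filter fun s => b (s+1) = 0 ∧ N (s+1) x = c s + 1).card : ℝ) with hKdef
      have hmkℕ : m ≤ k := by
        have : (m:ℝ) ≤ (k:ℝ) := by rw [← hm, ← hk]; exact hmk
        exact_mod_cast this
      rcases hb (t+2) with hb0 | hb1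
      · -- b (t+2) = 0, c (t+2) = k
        have hck : c (t+2) = k := by rw [hc', hb0, hk]; ring
        by_cases he : h (t+1) x ≠ f x
        · -- error at step t+1
          have hNval : N (t+2) x = m + 1 := by rw [hN, hm, if_pos he]
          by_cases hmk2 : m = k
          · -- capping event
            have hcap : b (t+1+1) = 0 ∧ N (t+1+1) x = c (t+1) + 1 := by
              refine ⟨hb0, ?_⟩
              rw [show t+1+1 = t+2 from rfl, hNval, hk, hmk2]
            have hMval : M (t+2) x = k := by
              rw [hM', hNval, hck, hmk2, min_eq_right (by linarith : (k:ℝ) ≤ (k:ℝ) + 1)]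
            refine ⟨⟨k, hMval⟩, ⟨k, hck⟩, by rw [hMval, hck], ?_⟩
            rw [hMval, hW, hK, if_pos he, if_pos hcap]
            have : M (t+1) x = W - K := hform
            rw [hm, hmk2] at this
            linarith
          · -- no capping: m < k
            have hmlt : m + 1 ≤ k := by omega
            have hMval : M (t+2) x = m + 1 := by
              rw [hM', hNval, hck, min_eq_left (by exact_mod_cast hmlt)]
            have hncap : ¬ (b (t+1+1) = 0 ∧ N (t+1+1) x = c (t+1) + 1) := by
              rintro ⟨-, hcon⟩
              rw [show t+1+1 = t+2 from rfl, hNval, hk] at hcon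
              have : m = k := by exact_mod_cast (by linarith : (m:ℝ) = k)
              exact hmk2 this
            refine ⟨⟨m+1, by rw [hMval]; push_cast; ring⟩, ⟨k, hck⟩,
              by rw [hMval, hck]; exact_mod_cast hmlt, ?_⟩
            rw [hMval, hW, hK, if_pos he, if_neg hncap]
            have : M (t+1) x = W - K := hform
            rw [hm] at this
            linarith
        · -- no error at step t+1
          have hNval : N (t+2) x = m := by rw [hN, hm, if_neg he]; ring
          have hMval : M (t+2) x = m := by
            rw [hM', hNval, hck, min_eq_left (by exact_mod_cast hmkℕ)]
          have hncap : ¬ (b (t+1+1) = 0 ∧ N (t+1+1) x = c (t+1) + 1) := by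
            rintro ⟨-, hcon⟩
            rw [show t+1+1 = t+2 from rfl, hNval, hk] at hcon
            have : (m:ℝ) ≤ k := by exact_mod_cast hmkℕ
            linarith
          refine ⟨⟨m, hMval⟩, ⟨k, hck⟩, by rw [hMval, hck]; exact_mod_cast hmkℕ, ?_⟩
          rw [hMval, hW, hK, if_neg he, if_neg hncap]
          have : M (t+1) x = W - K := hform
          rw [hm] at this
          linarith
      · -- b (t+2) = 1, c (t+2) = k + 1
        have hck : c (t+2) = k + 1 := by rw [hc', hb1, hk]
        have hncap : ¬ (b (t+1+1) = 0 ∧ N (t+1+1) x = c (t+1) + 1) := by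
          rintro ⟨hcon, -⟩
          rw [show t+1+1 = t+2 from rfl] at hcon
          rw [hb1] at hcon; exact one_ne_zero hcon
        by_cases he : h (t+1) x ≠ f x
        · have hNval : N (t+2) x = m + 1 := by rw [hN, hm, if_pos he]
          have hMval : M (t+2) x = m + 1 := by
            rw [hM', hNval, hck, min_eq_left (by push_cast; exact_mod_cast (by omega : m + 1 ≤ k + 1) )]
          refine ⟨⟨m+1, by rw [hMval]; push_cast; ring⟩, ⟨k+1, by rw [hck]; push_cast; ring⟩,
            ?_, ?_⟩
          · rw [hMval, hck]
            have : (m:ℝ) ≤ k := by exact_mod_cast hmkℕ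
            linarith
          · rw [hMval, hW, hK, if_pos he, if_neg hncap]
            have : M (t+1) x = W - K := hform
            rw [hm] at this
            linarith
        · have hNval : N (t+2) x = m := by rw [hN, hm, if_neg he]; ring
          have hMval : M (t+2) x = m := by
            rw [hM', hNval, hck]
            refine min_eq_left ?_
            have : (m:ℝ) ≤ k := by exact_mod_cast hmkℕ
            linarith
          refine ⟨⟨m, hMval⟩, ⟨k+1, by rw [hck]; push_cast; ring⟩, ?_, ?_⟩
          · rw [hMval, hck]
            have : (m:ℝ) ≤ k := by exact_mod_cast hmkℕ
            linarith
          · rw [hMval, hW, hK, if_neg he, if_neg hncap]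
            have : M (t+1) x = W - K := hform
            rw [hm] at this
            linarith
  -- misclassification implies at least T/2 errors
  have hW2 : ∀ x, H x ≠ f x →
      (T : ℝ) / 2 ≤ (((Icc 1 T).filter fun s => h s x ≠ f x).card : ℝ) := by
    intro x hx
    set W := ((Icc 1 T).filter fun s => h s x ≠ f x).card with hWdef
    set Ag := ((Icc 1 T).filter fun s => ¬ (h s x ≠ f x)).card with hAgdef
    have hsplit : W + Ag = T := by
      rw [hWdef, hAgdef, card_filter_add_card_filter_not, Nat.card_Icc]
      omega
    have hsum : ∑ t ∈ Icc 1 T, h t x = (Ag : ℝ) * f x - (W : ℝ) * f x := by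
      rw [← sum_filter_add_sum_filter_not (Icc 1 T) (fun s => h s x ≠ f x)]
      have e1 : ∑ t ∈ (Icc 1 T).filter (fun s => h s x ≠ f x), h t x
          = ∑ t ∈ (Icc 1 T).filter (fun s => h s x ≠ f x), (-(f x)) := by
        refine sum_congr rfl fun s hs => ?_
        have hne := (mem_filter.mp hs).2
        rcases hhpm s x with hh | hh <;> rcases hfpm x with hf | hf <;>
          first
            | exact absurd (hh.trans hf.symm) hne
            | simp [hh, hf]
      have e2 : ∑ t ∈ (Icc 1 T).filter (fun s => ¬ (h s x ≠ f x)), h t x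
          = ∑ t ∈ (Icc 1 T).filter (fun s => ¬ (h s x ≠ f x)), f x := by
        refine sum_congr rfl fun s hs => ?_
        exact not_not.mp (mem_filter.mp hs).2
      rw [e1, e2, sum_const, sum_const, ← hWdef, ← hAgdef]
      push_cast
      ring
    have hsplitR : (W : ℝ) + (Ag : ℝ) = T := by exact_mod_cast hsplit
    rcases hfpm x with hf | hf
    · -- f x = -1 : need 0 < sum
      have hHx : H x = if 0 < ∑ t ∈ Icc 1 T, h t x then 1 else -1 := hH x
      by_cases hpos : 0 < ∑ t ∈ Icc 1 T, h t x
      · rw [hsum, hf] at hpos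
        linarith
      · rw [if_neg hpos] at hHx
        exact absurd (hHx.trans hf.symm) hx
    · -- f x = 1 : need sum ≤ 0
      have hHx : H x = if 0 < ∑ t ∈ Icc 1 T, h t x then 1 else -1 := hH x
      by_cases hpos : 0 < ∑ t ∈ Icc 1 T, h t x
      · rw [if_pos hpos] at hHx
        exact absurd (hHx.trans hf.symm) hx
      · rw [hsum, hf] at hpos
        push_neg at hpos
        linarith
  -- the counting function
  set g : X → ℝ≥0∞ := fun x => ∑ t ∈ Icc 1 T, (A t).indicator 1 x with hg
  have hgmeas : ∀ t ∈ Icc 1 T, Measurable fun x => (A t).indicator (1 : X → ℝ≥0∞) x := by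
    intro t ht
    rw [mem_Icc] at ht
    exact measurable_const.indicator (hAmeas t ht.1 ht.2)
  -- bad set is contained in a superlevel set of g
  set L : ℝ≥0∞ := ENNReal.ofReal ((T:ℝ)/4) with hL
  have hBsub : {x | M (T+1) x < (T:ℝ)/4 ∧ H x ≠ f x} ⊆ {x | L ≤ g x} := by
    intro x hx
    obtain ⟨hxM, hxH⟩ := hx
    obtain ⟨-, -, -, hform⟩ := key x T le_rfl
    have hWT := hW2 x hxH
    set Kn := ((Icc 1 T).filter fun s => b (s+1) = 0 ∧ N (s+1) x = c s + 1).card with hKn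
    have hKgt : (T:ℝ)/4 < (Kn : ℝ) := by
      rw [hform] at hxM
      linarith
    have hAind : ∀ t, (A t).indicator (1 : X → ℝ≥0∞) x
        = if (b (t+1) = 0 ∧ N (t+1) x = c t + 1) then 1 else 0 := by
      intro t
      by_cases hq : b (t+1) = 0 ∧ N (t+1) x = c t + 1
      · rw [if_pos hq]
        have hxA : x ∈ A t := by
          rw [hA]
          simp only [if_pos hq.1]
          exact hq.2
        rw [Set.indicator_of_mem hxA]
        rfl
      · rw [if_neg hq]
        have hxA : x ∉ A t := by
          rw [hA]
          by_cases hbt : b (t+1) = 0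
          · simp only [if_pos hbt]
            intro hmem
            exact hq ⟨hbt, hmem⟩
          · simp only [if_neg hbt]
            exact Set.notMem_empty x
        rw [Set.indicator_of_notMem hxA]
    have hgx : g x = (Kn : ℝ≥0∞) := by
      have hgx0 : g x = ∑ t ∈ Icc 1 T, (A t).indicator 1 x := rfl
      rw [hgx0, sum_congr rfl (fun t _ => hAind t), Finset.sum_boole]
    rw [Set.mem_setOf_eq, hgx, hL]
    calc ENNReal.ofReal ((T:ℝ)/4) ≤ ENNReal.ofReal (Kn : ℝ) :=
          ENNReal.ofReal_le_ofReal hKgt.le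
      _ = (Kn : ℝ≥0∞) := ENNReal.ofReal_natCast Kn
  -- Markov
  have hmarkov : L * D {x | L ≤ g x} ≤ ∫⁻ x, g x ∂D :=
    mul_meas_ge_le_lintegral₀ ((Finset.measurable_sum _ hgmeas).aemeasurable) L
  have hint : ∫⁻ x, g x ∂D = ∑ t ∈ Icc 1 T, D (A t) := by
    rw [hg, lintegral_finset_sum _ hgmeas]
    refine sum_congr rfl fun t ht => ?_
    rw [mem_Icc] at ht
    exact lintegral_indicator_one (hAmeas t ht.1 ht.2)
  have hsumle : ∑ t ∈ Icc 1 T, D (A t) ≤ L * ENNReal.ofReal (ε/2) := by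
    calc ∑ t ∈ Icc 1 T, D (A t) ≤ (Icc 1 T).card • ENNReal.ofReal (ε/8) :=
          sum_le_card_nsmul _ _ _ hAsmall
      _ = (T : ℝ≥0∞) * ENNReal.ofReal (ε/8) := by
          rw [Nat.card_Icc]; simp [nsmul_eq_mul]
      _ = L * ENNReal.ofReal (ε/2) := by
          rw [hL, ← ENNReal.ofReal_natCast T, ← ENNReal.ofReal_mul (by positivity),
            ← ENNReal.ofReal_mul (by positivity)]
          congr 1
          ring
  have hL0 : L ≠ 0 := by
    rw [hL]
    simp only [ne_eq, ENNReal.ofReal_eq_zero, not_le]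
    positivity
  have hLtop : L ≠ ⊤ := ENNReal.ofReal_ne_top
  have hfinal : D {x | L ≤ g x} ≤ ENNReal.ofReal (ε/2) := by
    rw [← ENNReal.mul_le_mul_iff_right hL0 hLtop]
    exact hmarkov.trans (hint.le.trans hsumle)
  exact (measure_mono hBsub).trans hfinal
end

section
/- (Correctness of rMetaBoost.) Let ε ∈ (0,1) and T ≥ 8·log(2/ε). Assume that for every t ∈ {1,…,T}: (i) er_{D_{μ_t}}(h_t) ≤ 1/16, and (ii) if b_{t+1} = 0 then P_{x∼D}[N_{t+1}(x) = c_t + 1] ≤ ε/8. Then the final hypothesis H = sign(∑_{t=1}^T h_t) satisfies er_D(H) ≤ ε. -/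
/-!
The potential `∫ exp (M t) dD` grows by at most the factor `1 + (e - 1) / 16 ≤ e ^ (1 / 8)` per
round, since `M` only increases, by one, on the mistake set of `h t`, whose weighted mass is at
most `1 / 16`; by Chernoff's bound `M (T + 1) ≥ T / 4` then has probability at most
`e ^ (-T / 8) ≤ ε / 2`. The trimming loss `N (t + 1) - M (t + 1)` is `0` or `1`, and it is `0`
unless `b (t + 1) = 0` and `N (t + 1) = c t + 1`, so the total loss has mean at most `T ε / 8`
and exceeds `T / 4` with probability at most `ε / 2` by Markov's inequality. A wrong majority vote
needs at least `T / 2` mistakes, and the number of mistakes telescopes to `M (T + 1)` plus the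
total trimming loss.
-/

open MeasureTheory Finset Real

section

variable {X : Type*}

theorem card_le_two_mul_sum_ite_ne_of_sign_ne {ι : Type*} (s : Finset ι) {a : ι → ℝ} {y : ℝ}
    (ha : ∀ i ∈ s, a i = -1 ∨ a i = 1) (hy : y = -1 ∨ y = 1)
    (hwrong : (if 0 < ∑ i ∈ s, a i then 1 else -1) ≠ y) :
    (#s : ℝ) ≤ 2 * ∑ i ∈ s, if a i ≠ y then (1 : ℝ) else 0 := by
  have hterm : ∀ i ∈ s, y * a i = 1 - 2 * (if a i ≠ y then 1 else 0) := by
    intro i hi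
    rcases ha i hi with h | h <;> rcases hy with rfl | rfl <;> norm_num [h]
  have hvote : y * ∑ i ∈ s, a i ≤ 0 := by
    split_ifs at hwrong with hpos <;> rcases hy with rfl | rfl
    · linarith
    · norm_num at hwrong
    · norm_num at hwrong
    · linarith [not_lt.1 hpos]
  rw [mul_sum, sum_congr rfl hterm, sum_sub_distrib, ← mul_sum] at hvote
  simpa using hvote

theorem exists_nat_min_sub_add_eq_sub (c e b : ℝ) (k : ℕ) (he : e = 0 ∨ e = 1)
    (hb : b = 0 ∨ b = 1) : ∃ k' : ℕ, min (c - k + e) (c + b) = c + b - k' := by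
  rcases he with rfl | rfl <;> rcases hb with rfl | rfl
  · exact ⟨k, by simp⟩
  · exact ⟨k + 1, by push_cast; rw [min_eq_left (by linarith)]; ring⟩
  · rcases k with _ | k
    · exact ⟨0, by simp⟩
    · exact ⟨k, by push_cast; rw [min_eq_left (by linarith)]; ring⟩
  · exact ⟨k, by rw [min_eq_left (by linarith)]; ring⟩

theorem sub_min_sub_add_le_ite (c e b : ℝ) (k : ℕ) (he : e = 0 ∨ e = 1) (hb : b = 0 ∨ b = 1) :
    c - k + e - min (c - k + e) (c + b) ≤ if b = 0 ∧ c - k + e = c + 1 then 1 else 0 := by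
  by_cases hle : c - k + e ≤ c + b
  · rw [min_eq_left hle, sub_self]
    split_ifs <;> norm_num
  · rw [not_le] at hle
    have hk : (0 : ℝ) ≤ k := k.cast_nonneg
    rcases he with rfl | rfl <;> rcases hb with rfl | rfl <;> try linarith
    obtain rfl : k = 0 := Nat.lt_one_iff.1 (by exact_mod_cast (show (k : ℝ) < 1 by linarith))
    norm_num

section Measure

variable [MeasurableSpace X] {μ : Measure X}

theorem setIntegral_exp_le_of_withDensity_le [NeZero μ] {g : X → ℝ}
    {a δ : ℝ} {s : Set X} (hg : Integrable (fun x => exp (g x)) μ) (hs : MeasurableSet s)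
    (hδ : 0 ≤ δ)
    (h : μ.withDensity (fun x => ENNReal.ofReal (exp (g x - a) / ∫ y, exp (g y - a) ∂μ)) s
      ≤ ENNReal.ofReal δ) :
    ∫ x in s, exp (g x) ∂μ ≤ δ * ∫ x, exp (g x) ∂μ := by
  have hdens : (fun x => ENNReal.ofReal (exp (g x - a) / ∫ y, exp (g y - a) ∂μ))
      = fun x => ENNReal.ofReal (exp (g x) / ∫ y, exp (g y) ∂μ) := by
    funext x
    simp_rw [exp_sub, integral_div, div_div_div_cancel_right₀ (exp_pos a).ne']
  rw [hdens, withDensity_apply _ hs, ← ofReal_integral_eq_lintegral_ofReal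
    (hg.div_const _).integrableOn (ae_of_all _ fun x => by positivity), integral_div,
    ENNReal.ofReal_le_ofReal_iff hδ, div_le_iff₀ (integral_exp_pos hg)] at h
  exact h

theorem integral_exp_le_of_le_add_indicator {g g' : X → ℝ} {s : Set X} {δ : ℝ}
    (hg : Integrable (fun x => exp (g x)) μ) (hs : MeasurableSet s)
    (hle : ∀ x, g' x ≤ g x + s.indicator 1 x)
    (hδ : ∫ x in s, exp (g x) ∂μ ≤ δ * ∫ x, exp (g x) ∂μ) :
    ∫ x, exp (g' x) ∂μ ≤ (1 + (exp 1 - 1) * δ) * ∫ x, exp (g x) ∂μ := by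
  have hbound :
      Integrable (fun x => exp (g x) + (exp 1 - 1) * s.indicator (fun x => exp (g x)) x) μ :=
    hg.add ((hg.indicator hs).const_mul _)
  have hpt : ∀ x, exp (g' x) ≤ exp (g x) + (exp 1 - 1) * s.indicator (fun x => exp (g x)) x := by
    intro x
    refine (exp_le_exp.2 (hle x)).trans_eq ?_
    by_cases hx : x ∈ s <;> simp [hx, exp_add]
    ring
  have he : 0 ≤ exp 1 - 1 := by linarith [add_one_le_exp 1]
  calc ∫ x, exp (g' x) ∂μ
      ≤ ∫ x, exp (g x) + (exp 1 - 1) * s.indicator (fun x => exp (g x)) x ∂μ :=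
        integral_mono_of_nonneg (ae_of_all _ fun x => (exp_pos _).le) hbound (ae_of_all _ hpt)
    _ = ∫ x, exp (g x) ∂μ + (exp 1 - 1) * ∫ x in s, exp (g x) ∂μ := by
        rw [integral_add hg ((hg.indicator hs).const_mul _), integral_const_mul,
          integral_indicator hs]
    _ ≤ (1 + (exp 1 - 1) * δ) * ∫ x, exp (g x) ∂μ := by
        nlinarith [mul_le_mul_of_nonneg_left hδ he]

end Measure

/-- The counters `N`, `M` and the cap `c` of rMetaBoost, with `E t` the mistake set of `h t`. -/
structure IsCappedCount (T : ℕ) (E : ℕ → Set X) (b c : ℕ → ℝ) (N M : ℕ → X → ℝ) : Prop where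
  cap_one : c 1 = 0
  count_one : ∀ x, M 1 x = 0
  cap_succ : ∀ t, 1 ≤ t → t ≤ T → c (t + 1) = c t + b (t + 1)
  uncapped_succ : ∀ t, 1 ≤ t → t ≤ T → ∀ x, N (t + 1) x = M t x + (E t).indicator 1 x
  count_succ : ∀ t, 1 ≤ t → t ≤ T → ∀ x, M (t + 1) x = min (N (t + 1) x) (c (t + 1))

namespace IsCappedCount

variable {T : ℕ} {E : ℕ → Set X} {b c : ℕ → ℝ} {N M : ℕ → X → ℝ}

/-- This integrality is what makes each trimming loss `0` or `1`. -/
theorem exists_nat_eq_sub (hr : IsCappedCount T E b c N M) (hb : ∀ t, b t = 0 ∨ b t = 1) :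
    ∀ t, 1 ≤ t → t ≤ T + 1 → ∀ x, ∃ k : ℕ, M t x = c t - k := by
  intro t ht
  induction t, ht using Nat.le_induction with
  | base => exact fun _ x => ⟨0, by simp [hr.count_one, hr.cap_one]⟩
  | succ t ht ih =>
    intro htT x
    obtain ⟨k, hk⟩ := ih (by omega) x
    rw [hr.count_succ t ht (by omega), hr.uncapped_succ t ht (by omega),
      hr.cap_succ t ht (by omega), hk]
    exact exists_nat_min_sub_add_eq_sub _ _ _ k (Set.indicator_eq_zero_or_self _ _ _) (hb _)

theorem le_cap (hr : IsCappedCount T E b c N M) (hb : ∀ t, b t = 0 ∨ b t = 1) {t : ℕ}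
    (h1 : 1 ≤ t) (hT : t ≤ T + 1) (x : X) : M t x ≤ c t := by
  obtain ⟨k, hk⟩ := hr.exists_nat_eq_sub hb t h1 hT x
  linarith [k.cast_nonneg (α := ℝ)]

theorem count_succ_le (hr : IsCappedCount T E b c N M) {t : ℕ} (h1 : 1 ≤ t) (hT : t ≤ T)
    (x : X) : M (t + 1) x ≤ M t x + (E t).indicator 1 x := by
  rw [hr.count_succ t h1 hT, ← hr.uncapped_succ t h1 hT]
  exact min_le_left _ _

theorem count_le_uncapped (hr : IsCappedCount T E b c N M) {t : ℕ} (h1 : 1 ≤ t) (hT : t ≤ T)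
    (x : X) : M (t + 1) x ≤ N (t + 1) x := by
  rw [hr.count_succ t h1 hT]
  exact min_le_left _ _

theorem sub_count_le_indicator (hr : IsCappedCount T E b c N M) (hb : ∀ t, b t = 0 ∨ b t = 1)
    {t : ℕ} (h1 : 1 ≤ t) (hT : t ≤ T) (x : X) :
    N (t + 1) x - M (t + 1) x ≤ {x | b (t + 1) = 0 ∧ N (t + 1) x = c t + 1}.indicator 1 x := by
  obtain ⟨k, hk⟩ := hr.exists_nat_eq_sub hb t h1 (by omega) x
  have hN : N (t + 1) x = c t - k + (E t).indicator 1 x := by rw [hr.uncapped_succ t h1 hT, hk]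
  have key := sub_min_sub_add_le_ite (c t) _ (b (t + 1)) k
    (Set.indicator_eq_zero_or_self (E t) 1 x) (hb _)
  rw [← hN] at key
  rw [hr.count_succ t h1 hT, hr.cap_succ t h1 hT]
  exact key.trans_eq (by simp [Set.indicator_apply])

theorem sum_indicator_eq (hr : IsCappedCount T E b c N M) (x : X) :
    ∑ t ∈ Icc 1 T, (E t).indicator 1 x
      = M (T + 1) x + ∑ t ∈ Icc 1 T, (N (t + 1) x - M (t + 1) x) := by
  suffices ∀ t ≤ T, ∑ s ∈ Icc 1 t, (E s).indicator 1 x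
      = M (t + 1) x + ∑ s ∈ Icc 1 t, (N (s + 1) x - M (s + 1) x) from this T le_rfl
  intro t
  induction t with
  | zero => simp [hr.count_one]
  | succ t ih =>
    intro ht
    rw [sum_Icc_succ_top (by omega), sum_Icc_succ_top (by omega), ih (by omega),
      hr.uncapped_succ (t + 1) (by omega) ht]
    ring

section Measure

variable [MeasurableSpace X] {μ : Measure X}

theorem measurable_count (hr : IsCappedCount T E b c N M) (hE : ∀ t, MeasurableSet (E t)) :
    ∀ t, 1 ≤ t → t ≤ T + 1 → Measurable (M t) := by
  intro t ht
  induction t, ht using Nat.le_induction with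
  | base => exact fun _ => by rw [funext hr.count_one]; exact measurable_const
  | succ t ht ih =>
    intro htT
    have hM : M (t + 1) = fun x => min (M t x + (E t).indicator 1 x) (c (t + 1)) := by
      funext x
      rw [hr.count_succ t ht (by omega), hr.uncapped_succ t ht (by omega)]
    rw [hM]
    exact ((ih (by omega)).add (measurable_const.indicator (hE t))).min measurable_const

theorem measurable_uncapped (hr : IsCappedCount T E b c N M) (hE : ∀ t, MeasurableSet (E t))
    {t : ℕ} (h1 : 1 ≤ t) (hT : t ≤ T) : Measurable (N (t + 1)) := by
  rw [funext (hr.uncapped_succ t h1 hT)]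
  exact (hr.measurable_count hE t h1 (by omega)).add (measurable_const.indicator (hE t))

theorem integrable_exp_count [IsFiniteMeasure μ] (hr : IsCappedCount T E b c N M)
    (hb : ∀ t, b t = 0 ∨ b t = 1) (hE : ∀ t, MeasurableSet (E t)) {t : ℕ} (h1 : 1 ≤ t)
    (hT : t ≤ T + 1) : Integrable (fun x => exp (M t x)) μ :=
  .of_bound (hr.measurable_count hE t h1 hT).exp.aestronglyMeasurable (exp (c t))
    (ae_of_all _ fun x => by
      rw [norm_of_nonneg (exp_pos _).le]
      exact exp_le_exp.2 (hr.le_cap hb h1 hT x))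

theorem integral_exp_count_le [IsProbabilityMeasure μ] (hr : IsCappedCount T E b c N M)
    (hb : ∀ t, b t = 0 ∨ b t = 1) (hE : ∀ t, MeasurableSet (E t)) {δ : ℝ} (hδ : 0 ≤ δ)
    (hweak : ∀ t, 1 ≤ t → t ≤ T → ∫ x in E t, exp (M t x) ∂μ ≤ δ * ∫ x, exp (M t x) ∂μ) :
    ∀ t ≤ T, ∫ x, exp (M (t + 1) x) ∂μ ≤ (1 + (exp 1 - 1) * δ) ^ t := by
  have hq : 0 ≤ 1 + (exp 1 - 1) * δ := by nlinarith [add_one_le_exp 1]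
  intro t
  induction t with
  | zero => intro _; simp [hr.count_one]
  | succ t ih =>
    intro ht
    calc ∫ x, exp (M (t + 1 + 1) x) ∂μ
        ≤ (1 + (exp 1 - 1) * δ) * ∫ x, exp (M (t + 1) x) ∂μ :=
          integral_exp_le_of_le_add_indicator
            (hr.integrable_exp_count hb hE (by omega) (by omega)) (hE _)
            (hr.count_succ_le (by omega) ht) (hweak _ (by omega) ht)
      _ ≤ (1 + (exp 1 - 1) * δ) * (1 + (exp 1 - 1) * δ) ^ t :=
          mul_le_mul_of_nonneg_left (ih (by omega)) hq
      _ = (1 + (exp 1 - 1) * δ) ^ (t + 1) := (pow_succ' _ _).symm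

theorem measureReal_count_ge_le [IsProbabilityMeasure μ] (hr : IsCappedCount T E b c N M)
    (hb : ∀ t, b t = 0 ∨ b t = 1) (hE : ∀ t, MeasurableSet (E t)) {δ : ℝ} (hδ : 0 ≤ δ)
    (hweak : ∀ t, 1 ≤ t → t ≤ T → ∫ x in E t, exp (M t x) ∂μ ≤ δ * ∫ x, exp (M t x) ∂μ)
    (a : ℝ) : μ.real {x | a ≤ M (T + 1) x} ≤ exp (-a) * (1 + (exp 1 - 1) * δ) ^ T := by
  have hint := hr.integrable_exp_count (μ := μ) hb hE (by omega) le_rfl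
  calc μ.real {x | a ≤ M (T + 1) x} ≤ exp (-1 * a) * ProbabilityTheory.mgf (M (T + 1)) μ 1 :=
        ProbabilityTheory.measure_ge_le_exp_mul_mgf a zero_le_one (by simpa using hint)
    _ ≤ exp (-a) * (1 + (exp 1 - 1) * δ) ^ T := by
        simp only [ProbabilityTheory.mgf, one_mul, neg_one_mul]
        gcongr
        exact hr.integral_exp_count_le hb hE hδ hweak T le_rfl

theorem integrable_sub_count [IsFiniteMeasure μ] (hr : IsCappedCount T E b c N M)
    (hb : ∀ t, b t = 0 ∨ b t = 1) (hE : ∀ t, MeasurableSet (E t)) {t : ℕ} (h1 : 1 ≤ t)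
    (hT : t ≤ T) : Integrable (fun x => N (t + 1) x - M (t + 1) x) μ := by
  refine .of_bound ((hr.measurable_uncapped hE h1 hT).sub
    (hr.measurable_count hE (t + 1) (by omega) (by omega))).aestronglyMeasurable 1
    (ae_of_all _ fun x => ?_)
  rw [norm_of_nonneg (sub_nonneg.2 (hr.count_le_uncapped h1 hT x))]
  exact (hr.sub_count_le_indicator hb h1 hT x).trans (Set.indicator_le_self' (by simp) x)

theorem integral_sub_count_le [IsFiniteMeasure μ] (hr : IsCappedCount T E b c N M)
    (hb : ∀ t, b t = 0 ∨ b t = 1) (hE : ∀ t, MeasurableSet (E t)) {δ : ℝ} (hδ : 0 ≤ δ)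
    {t : ℕ} (h1 : 1 ≤ t) (hT : t ≤ T)
    (hthr : b (t + 1) = 0 → μ.real {x | N (t + 1) x = c t + 1} ≤ δ) :
    ∫ x, (N (t + 1) x - M (t + 1) x) ∂μ ≤ δ := by
  set S := {x | b (t + 1) = 0 ∧ N (t + 1) x = c t + 1}
  have hS : MeasurableSet S :=
    (MeasurableSet.const _).inter
      (measurableSet_eq_fun (hr.measurable_uncapped hE h1 hT) measurable_const)
  calc ∫ x, (N (t + 1) x - M (t + 1) x) ∂μ ≤ ∫ x, S.indicator 1 x ∂μ :=
        integral_mono_of_nonneg (ae_of_all _ fun x => sub_nonneg.2 (hr.count_le_uncapped h1 hT x))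
          ((integrable_const 1).indicator hS) (ae_of_all _ (hr.sub_count_le_indicator hb h1 hT))
    _ = μ.real S := integral_indicator_one hS
    _ ≤ δ := by
        by_cases hb0 : b (t + 1) = 0
        · simpa [S, hb0] using hthr hb0
        · simpa [S, hb0] using hδ

theorem measureReal_sum_sub_count_ge_le [IsFiniteMeasure μ] (hr : IsCappedCount T E b c N M)
    (hb : ∀ t, b t = 0 ∨ b t = 1) (hE : ∀ t, MeasurableSet (E t)) {δ : ℝ} (hδ : 0 ≤ δ)
    (hthr : ∀ t, 1 ≤ t → t ≤ T → b (t + 1) = 0 → μ.real {x | N (t + 1) x = c t + 1} ≤ δ)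
    {a : ℝ} (ha : 0 < a) :
    μ.real {x | a ≤ ∑ t ∈ Icc 1 T, (N (t + 1) x - M (t + 1) x)} ≤ T * δ / a := by
  have hint : ∀ t ∈ Icc 1 T, Integrable (fun x => N (t + 1) x - M (t + 1) x) μ := fun t ht =>
    hr.integrable_sub_count hb hE (mem_Icc.1 ht).1 (mem_Icc.1 ht).2
  have hmarkov := mul_meas_ge_le_integral_of_nonneg
    (ae_of_all μ fun x => sum_nonneg fun t ht =>
      sub_nonneg.2 (hr.count_le_uncapped (mem_Icc.1 ht).1 (mem_Icc.1 ht).2 x))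
    (integrable_finsetSum _ hint) a
  have hsum : ∫ x, ∑ t ∈ Icc 1 T, (N (t + 1) x - M (t + 1) x) ∂μ ≤ T * δ := by
    rw [integral_finsetSum _ hint]
    calc ∑ t ∈ Icc 1 T, ∫ x, (N (t + 1) x - M (t + 1) x) ∂μ ≤ ∑ t ∈ Icc 1 T, δ :=
          sum_le_sum fun t ht => hr.integral_sub_count_le hb hE hδ (mem_Icc.1 ht).1
            (mem_Icc.1 ht).2 (hthr t (mem_Icc.1 ht).1 (mem_Icc.1 ht).2)
      _ = T * δ := by simp
  rw [le_div_iff₀ ha, mul_comm]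
  linarith

end Measure

end IsCappedCount

end

theorem exp_neg_div_four_mul_pow_le {T : ℕ} {ε : ℝ} (hε : 0 < ε) (hT : 8 * log (2 / ε) ≤ T) :
    exp (-(T / 4)) * (1 + (exp 1 - 1) * (1 / 16)) ^ T ≤ ε / 2 := by
  have hq : 1 + (exp 1 - 1) * (1 / 16) ≤ exp (1 / 8) := by
    linarith [exp_one_lt_d9, add_one_le_exp (1 / 8)]
  have hlog : log (ε / 2) = -log (2 / ε) := by rw [← log_inv, inv_div]
  calc exp (-(T / 4)) * (1 + (exp 1 - 1) * (1 / 16)) ^ T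
      ≤ exp (-(T / 4)) * exp (1 / 8) ^ T := by gcongr; linarith [add_one_le_exp (1 : ℝ)]
    _ = exp (-(T / 8)) := by rw [← exp_nat_mul, ← exp_add]; ring_nf
    _ ≤ exp (log (ε / 2)) := exp_le_exp.2 (by linarith)
    _ = ε / 2 := exp_log (by positivity)

theorem rMetaBoost_correct_general
    {X : Type*} [MeasurableSpace X]
    (D : Measure X) [IsProbabilityMeasure D]
    (f : X → ℝ) (hfm : Measurable f) (hfpm : ∀ x, f x = -1 ∨ f x = 1)
    (T : ℕ) (hT : 0 < T)
    (h : ℕ → X → ℝ) (hhm : ∀ t, Measurable (h t)) (hhpm : ∀ t x, h t x = -1 ∨ h t x = 1)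
    (b : ℕ → ℝ) (hb : ∀ t, b t = 0 ∨ b t = 1)
    (c : ℕ → ℝ) (N M : ℕ → X → ℝ)
    (hc1 : c 1 = 0) (hM1 : ∀ x, M 1 x = 0)
    (hcrec : ∀ t, 1 ≤ t → t ≤ T → c (t + 1) = c t + b (t + 1))
    (hNrec : ∀ t, 1 ≤ t → t ≤ T → ∀ x,
      N (t + 1) x = M t x + if h t x ≠ f x then 1 else 0)
    (hMrec : ∀ t, 1 ≤ t → t ≤ T → ∀ x, M (t + 1) x = min (N (t + 1) x) (c (t + 1)))
    (Dμ : ℕ → Measure X)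
    (hDμ : ∀ t, Dμ t = D.withDensity fun x =>
      ENNReal.ofReal (Real.exp (M t x - c t) / ∫ y, Real.exp (M t y - c t) ∂D))
    (ε : ℝ) (hε : ε ∈ Set.Ioo (0 : ℝ) 1) (hTε : 8 * Real.log (2 / ε) ≤ (T : ℝ))
    (her : ∀ t, 1 ≤ t → t ≤ T → Dμ t {x | h t x ≠ f x} ≤ ENNReal.ofReal (1 / 16))
    (hthr : ∀ t, 1 ≤ t → t ≤ T → b (t + 1) = 0 →
      D {x | N (t + 1) x = c t + 1} ≤ ENNReal.ofReal (ε / 8))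
    (H : X → ℝ)
    (hH : ∀ x, H x = if 0 < ∑ t ∈ Finset.Icc 1 T, h t x then 1 else -1) :
    D {x | H x ≠ f x} ≤ ENNReal.ofReal ε := by
  set E : ℕ → Set X := fun t => {x | h t x ≠ f x}
  have hE : ∀ t, MeasurableSet (E t) := fun t => (measurableSet_eq_fun (hhm t) hfm).compl
  have hind : ∀ t x, (E t).indicator 1 x = if h t x ≠ f x then (1 : ℝ) else 0 := fun t x => by
    simp [E, Set.indicator_apply]
  have hr : IsCappedCount T E b c N M :=
    ⟨hc1, hM1, hcrec, fun t h1 h2 x => by rw [hNrec t h1 h2 x, hind], hMrec⟩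
  have hweak : ∀ t, 1 ≤ t → t ≤ T → ∫ x in E t, exp (M t x) ∂D ≤ 1 / 16 * ∫ x, exp (M t x) ∂D :=
    fun t h1 h2 => setIntegral_exp_le_of_withDensity_le
      (hr.integrable_exp_count hb hE h1 (by omega)) (hE t) (by norm_num) (hDμ t ▸ her t h1 h2)
  have hcount : D.real {x | (T : ℝ) / 4 ≤ M (T + 1) x} ≤ ε / 2 :=
    (hr.measureReal_count_ge_le hb hE (by norm_num) hweak _).trans
      (exp_neg_div_four_mul_pow_le hε.1 hTε)
  have htrim : D.real {x | (T : ℝ) / 4 ≤ ∑ t ∈ Icc 1 T, (N (t + 1) x - M (t + 1) x)} ≤ ε / 2 :=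
    (hr.measureReal_sum_sub_count_ge_le hb hE (by linarith [hε.1])
      (fun t h1 h2 hb0 => ENNReal.toReal_le_of_le_ofReal (by linarith [hε.1]) (hthr t h1 h2 hb0))
      (by positivity)).trans_eq (by field_simp; ring)
  have hsub : {x | H x ≠ f x} ⊆ {x | (T : ℝ) / 4 ≤ M (T + 1) x} ∪
      {x | (T : ℝ) / 4 ≤ ∑ t ∈ Icc 1 T, (N (t + 1) x - M (t + 1) x)} := by
    intro x hx
    have hhalf := card_le_two_mul_sum_ite_ne_of_sign_ne (Icc 1 T) (fun t _ => hhpm t x) (hfpm x)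
      (by rwa [← hH x])
    have htel := hr.sum_indicator_eq x
    simp only [hind, Nat.card_Icc, add_tsub_cancel_right] at hhalf htel
    by_contra hcon
    simp only [Set.mem_union, Set.mem_ofPred_eq, not_or, not_le] at hcon
    linarith
  rw [← ofReal_measureReal]
  exact ENNReal.ofReal_le_ofReal ((measureReal_mono hsub).trans
    ((measureReal_union_le _ _).trans (by linarith)))

/-- Correctness of rMetaBoost: if `T ≥ 8·log(2/ε)`, every `h_t` has error at most `1/16`
under `D_{μ_t}`, and whenever `b_{t+1} = 0` the capped mass satisfies
`P_{x∼D}[N_{t+1}(x) = c_t+1] ≤ ε/8`, then the majority vote `H = sign(∑_t h_t)`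
satisfies `er_D(H) ≤ ε`. -/
theorem rMetaBoost_correct
    {X : Type*} [MeasurableSpace X]
    (D : Measure X) [IsProbabilityMeasure D]
    (f : X → ℝ) (hfm : Measurable f) (hfpm : ∀ x, f x = -1 ∨ f x = 1)
    (T : ℕ) (hT : 0 < T)
    (h : ℕ → X → ℝ) (hhm : ∀ t, Measurable (h t)) (hhpm : ∀ t x, h t x = -1 ∨ h t x = 1)
    (b : ℕ → ℝ) (hb : ∀ t, b t = 0 ∨ b t = 1)
    (c : ℕ → ℝ) (N M : ℕ → X → ℝ)
    (hc1 : c 1 = 0) (hN1 : ∀ x, N 1 x = 0) (hM1 : ∀ x, M 1 x = 0)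
    (hcrec : ∀ t, 1 ≤ t → t ≤ T → c (t + 1) = c t + b (t + 1))
    (hNrec : ∀ t, 1 ≤ t → t ≤ T → ∀ x,
      N (t + 1) x = M t x + if h t x ≠ f x then 1 else 0)
    (hMrec : ∀ t, 1 ≤ t → t ≤ T → ∀ x, M (t + 1) x = min (N (t + 1) x) (c (t + 1)))
    (Dμ : ℕ → Measure X)
    (hDμ : ∀ t, Dμ t = D.withDensity fun x =>
      ENNReal.ofReal (Real.exp (M t x - c t) / ∫ y, Real.exp (M t y - c t) ∂D))
    (ε : ℝ) (hε : ε ∈ Set.Ioo (0 : ℝ) 1) (hTε : 8 * Real.log (2 / ε) ≤ (T : ℝ))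
    (her : ∀ t, 1 ≤ t → t ≤ T → Dμ t {x | h t x ≠ f x} ≤ ENNReal.ofReal (1 / 16))
    (hthr : ∀ t, 1 ≤ t → t ≤ T → b (t + 1) = 0 →
      D {x | N (t + 1) x = c t + 1} ≤ ENNReal.ofReal (ε / 8))
    (H : X → ℝ)
    (hH : ∀ x, H x = if 0 < ∑ t ∈ Finset.Icc 1 T, h t x then 1 else -1) :
    D {x | H x ≠ f x} ≤ ENNReal.ofReal ε :=
  rMetaBoost_correct_general D f hfm hfpm T hT h hhm hhpm b hb c N M hc1 hM1 hcrec hNrec hMrec Dμ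
    hDμ ε hε hTε her hthr H hH
end

section
/- (High density of μ_t.) Let ε ∈ (0,1) and assume that for every t ∈ {1,…,T}: if b_{t+1} = 1 then P_{x∼D}[N_{t+1}(x) = c_t + 1] > ε/32. Then for every t ∈ {1,…,T}, d(μ_t) ≥ P_{x∼D}[M_t(x) ≥ c_t] > ε/32. -/
/-!
Since `M_t ≤ c_t`, `μ_t ≤ 1` with equality exactly on `{c_t ≤ M_t}`, so Markov's inequality gives
`d(μ_t) ≥ P[M_t ≥ c_t]`. The bound `P[M_t ≥ c_t] > ε/32` is by induction on `t`: if `b_{t+1} = 0`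
then `c` stays put and `M_{t+1} ≥ min(M_t, c_t)`, so the event `{M_t ≥ c_t}` can only grow; if
`b_{t+1} = 1` then `{M_{t+1} ≥ c_{t+1}}` contains `{N_{t+1} = c_t + 1}`, which is large by hypothesis.
-/

open MeasureTheory Real

section Markov

variable {X : Type*} [MeasurableSpace X] {μ : Measure X} {u : X → ℝ} {a : ℝ}

lemma measureReal_le_integral_exp_sub (hu : Integrable (fun x => exp (u x - a)) μ) :
    μ.real {x | a ≤ u x} ≤ ∫ x, exp (u x - a) ∂μ := by
  simpa only [one_mul, one_le_exp_iff, sub_nonneg] using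
    mul_meas_ge_le_integral_of_nonneg (ae_of_all _ fun x => (exp_pos _).le) hu 1

lemma integrable_exp_sub_of_le [IsFiniteMeasure μ] (hu : Measurable u) (hle : ∀ x, u x ≤ a) :
    Integrable (fun x => exp (u x - a)) μ :=
  .of_bound (hu.sub_const a).exp.aestronglyMeasurable 1 <| ae_of_all _ fun x => by
    rw [norm_of_nonneg (exp_pos _).le]
    exact exp_le_one_iff.2 (sub_nonpos.2 (hle x))

end Markov

structure IsMetaBoostTrace {X : Type*} (T : ℕ) (f : X → ℝ) (h : ℕ → X → ℝ) (b c : ℕ → ℝ)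
    (N M : ℕ → X → ℝ) : Prop where
  c_one : c 1 = 0
  M_one : ∀ x, M 1 x = 0
  c_succ : ∀ t, 1 ≤ t → t ≤ T → c (t + 1) = c t + b (t + 1)
  N_succ : ∀ t, 1 ≤ t → t ≤ T → ∀ x, N (t + 1) x = M t x + if h t x ≠ f x then 1 else 0
  M_succ : ∀ t, 1 ≤ t → t ≤ T → ∀ x, M (t + 1) x = min (N (t + 1) x) (c (t + 1))

namespace IsMetaBoostTrace

variable {X : Type*} {T : ℕ} {f : X → ℝ} {h : ℕ → X → ℝ} {b c : ℕ → ℝ} {N M : ℕ → X → ℝ}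
  {t : ℕ}

lemma M_le_c (hrun : IsMetaBoostTrace T f h b c N M) (ht : 1 ≤ t) (htT : t ≤ T + 1) (x : X) :
    M t x ≤ c t := by
  obtain rfl | ⟨s, hs, rfl⟩ : t = 1 ∨ ∃ s, 1 ≤ s ∧ t = s + 1 :=
    (eq_or_lt_of_le ht).imp Eq.symm fun _ => ⟨t - 1, by omega, by omega⟩
  · rw [hrun.M_one, hrun.c_one]
  · rw [hrun.M_succ s hs (by omega)]
    exact min_le_right _ _

lemma M_le_N_succ (hrun : IsMetaBoostTrace T f h b c N M) (ht : 1 ≤ t) (htT : t ≤ T) (x : X) :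
    M t x ≤ N (t + 1) x := by
  rw [hrun.N_succ t ht htT]
  split_ifs <;> linarith

lemma c_succ_le_M_succ_iff (hrun : IsMetaBoostTrace T f h b c N M) (ht : 1 ≤ t) (htT : t ≤ T)
    (x : X) : c (t + 1) ≤ M (t + 1) x ↔ c (t + 1) ≤ N (t + 1) x := by
  rw [hrun.M_succ t ht htT, le_min_iff, and_iff_left le_rfl]

lemma measurable_M [MeasurableSpace X] (hrun : IsMetaBoostTrace T f h b c N M)
    (hf : Measurable f) (hh : ∀ t, Measurable (h t)) (ht : 1 ≤ t) (htT : t ≤ T + 1) :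
    Measurable (M t) := by
  induction t, ht using Nat.le_induction with
  | base => simpa only [funext hrun.M_one] using measurable_const
  | succ s hs ih =>
    have hN : Measurable (N (s + 1)) := by
      rw [funext (hrun.N_succ s hs (by omega))]
      exact (ih (by omega)).add <|
        Measurable.ite (measurableSet_eq_fun (hh s) hf).compl measurable_const measurable_const
    rw [funext (hrun.M_succ s hs (by omega))]
    exact hN.min measurable_const

lemma lt_measure_c_le_M [MeasurableSpace X] {D : Measure X} {δ : ENNReal}
    (hrun : IsMetaBoostTrace T f h b c N M) (hb : ∀ t, b t = 0 ∨ b t = 1) (hδ : δ < D Set.univ)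
    (hthr : ∀ t, 1 ≤ t → t ≤ T → b (t + 1) = 1 → δ < D {x | N (t + 1) x = c t + 1})
    (ht : 1 ≤ t) (htT : t ≤ T + 1) : δ < D {x | c t ≤ M t x} := by
  induction t, ht using Nat.le_induction with
  | base => simpa only [hrun.c_one, hrun.M_one, le_refl, Set.ofPred_true] using hδ
  | succ s hs ih =>
    have hsT : s ≤ T := by omega
    rcases hb (s + 1) with hb0 | hb1
    · have hc : c (s + 1) = c s := by rw [hrun.c_succ s hs hsT, hb0, add_zero]
      refine (ih (by omega)).trans_le (measure_mono fun x (hx : c s ≤ M s x) => ?_)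
      show c (s + 1) ≤ M (s + 1) x
      rw [hrun.c_succ_le_M_succ_iff hs hsT, hc]
      exact hx.trans (hrun.M_le_N_succ hs hsT x)
    · have hc : c (s + 1) = c s + 1 := by rw [hrun.c_succ s hs hsT, hb1]
      refine (hthr s hs hsT hb1).trans_le (measure_mono fun x (hx : N (s + 1) x = c s + 1) => ?_)
      show c (s + 1) ≤ M (s + 1) x
      rw [hrun.c_succ_le_M_succ_iff hs hsT, hc, hx]

end IsMetaBoostTrace

theorem rMetaBoost_high_density_general
    {X : Type*} [MeasurableSpace X]
    (D : Measure X) [IsProbabilityMeasure D]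
    (f : X → ℝ) (hfm : Measurable f)
    (T : ℕ)
    (h : ℕ → X → ℝ) (hhm : ∀ t, Measurable (h t))
    (b : ℕ → ℝ) (hb : ∀ t, b t = 0 ∨ b t = 1)
    (c : ℕ → ℝ) (N M : ℕ → X → ℝ)
    (hc1 : c 1 = 0) (hM1 : ∀ x, M 1 x = 0)
    (hcrec : ∀ t, 1 ≤ t → t ≤ T → c (t + 1) = c t + b (t + 1))
    (hNrec : ∀ t, 1 ≤ t → t ≤ T → ∀ x,
      N (t + 1) x = M t x + if h t x ≠ f x then 1 else 0)
    (hMrec : ∀ t, 1 ≤ t → t ≤ T → ∀ x, M (t + 1) x = min (N (t + 1) x) (c (t + 1)))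
    (ε : ℝ) (hε : ε ∈ Set.Ioo (0 : ℝ) 1)
    (hthr : ∀ t, 1 ≤ t → t ≤ T → b (t + 1) = 1 →
      ENNReal.ofReal (ε / 32) < D {x | N (t + 1) x = c t + 1}) :
    ∀ t, 1 ≤ t → t ≤ T →
      ε / 32 < (D {x | c t ≤ M t x}).toReal ∧
      (D {x | c t ≤ M t x}).toReal ≤ ∫ x, Real.exp (M t x - c t) ∂D := by
  have hrun : IsMetaBoostTrace T f h b c N M := ⟨hc1, hM1, hcrec, hNrec, hMrec⟩
  intro t ht htT
  have hδ : ENNReal.ofReal (ε / 32) < D Set.univ := by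
    rw [measure_univ, ENNReal.ofReal_lt_one]
    linarith [hε.2]
  constructor
  · exact (ENNReal.ofReal_lt_iff_lt_toReal (by linarith [hε.1]) (measure_ne_top _ _)).1
      (hrun.lt_measure_c_le_M hb hδ hthr ht (by omega))
  · exact measureReal_le_integral_exp_sub <| integrable_exp_sub_of_le
      (hrun.measurable_M hfm hhm ht (by omega)) (hrun.M_le_c ht (by omega))

/-- High density of `μ_t`: if for every `t ∈ {1,…,T}`, `b_{t+1} = 1` implies
`P_{x∼D}[N_{t+1}(x) = c_t+1] > ε/32`, then for every `t ∈ {1,…,T}`,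
`d(μ_t) ≥ P_{x∼D}[M_t(x) ≥ c_t] > ε/32` where `μ_t(x) = exp(M_t(x) − c_t)`. -/
theorem rMetaBoost_high_density
    {X : Type*} [MeasurableSpace X]
    (D : Measure X) [IsProbabilityMeasure D]
    (f : X → ℝ) (hfm : Measurable f) (hfpm : ∀ x, f x = -1 ∨ f x = 1)
    (T : ℕ) (hT : 0 < T)
    (h : ℕ → X → ℝ) (hhm : ∀ t, Measurable (h t)) (hhpm : ∀ t x, h t x = -1 ∨ h t x = 1)
    (b : ℕ → ℝ) (hb : ∀ t, b t = 0 ∨ b t = 1)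
    (c : ℕ → ℝ) (N M : ℕ → X → ℝ)
    (hc1 : c 1 = 0) (hN1 : ∀ x, N 1 x = 0) (hM1 : ∀ x, M 1 x = 0)
    (hcrec : ∀ t, 1 ≤ t → t ≤ T → c (t + 1) = c t + b (t + 1))
    (hNrec : ∀ t, 1 ≤ t → t ≤ T → ∀ x,
      N (t + 1) x = M t x + if h t x ≠ f x then 1 else 0)
    (hMrec : ∀ t, 1 ≤ t → t ≤ T → ∀ x, M (t + 1) x = min (N (t + 1) x) (c (t + 1)))
    (ε : ℝ) (hε : ε ∈ Set.Ioo (0 : ℝ) 1)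
    (hthr : ∀ t, 1 ≤ t → t ≤ T → b (t + 1) = 1 →
      ENNReal.ofReal (ε / 32) < D {x | N (t + 1) x = c t + 1}) :
    ∀ t, 1 ≤ t → t ≤ T →
      ε / 32 < (D {x | c t ≤ M t x}).toReal ∧
      (D {x | c t ≤ M t x}).toReal ≤ ∫ x, Real.exp (M t x - c t) ∂D :=
  rMetaBoost_high_density_general D f hfm T h hhm b hb c N M hc1 hM1 hcrec hNrec hMrec ε hε hthr
end
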